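/- arXiv:1910.08652 — 9 statements merged into one kernel-verified Lean document; each statement's English description precedes it below -/
import Mathlib

section
/- Let S ∈ ℝ^{n×n} be symmetric with nullspace of dimension n_3, and let Z ∈ ℝ^{n×n_3} span N(S). Partition Z^T = [Y_1^T, Y_2^T] with Y_2 ∈ ℝ^{n_3×n_3} nonsingular, and conformally partition S = [[S_{11}, S_{12}],[S_{12}^T, S_{22}]] with S_{11} of size (n-n_3)×(n-n_3). Then S_{11} is nonsingular, and S_{11} has the same numbers of positive and negative eigenvalues as S. -/
/-!
Normalising the kernel basis to `Z Y₂⁻¹ = [W; 1]` makes `S` and its leading block congruent in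
both directions: `S = [1, -W]ᵀ S₁₁ [1, -W]` and `S₁₁ = [1; 0]ᵀ S [1; 0]`. Pulling a quadratic
form back along a linear map cannot increase its positive or negative index, so `S` and `S₁₁`
have the same inertia, which by Sylvester's law counts the signs of the eigenvalues. If
`S₁₁ u = 0` then `S [u; 0] = 0`, so `[u; 0]` is a combination of the columns of `[W; 1]`, which
forces `u = 0`.
-/

open Matrix QuadraticMap

namespace QuadraticForm

variable {𝕜 M M' : Type*} [Field 𝕜] [LinearOrder 𝕜]
  [AddCommGroup M] [Module 𝕜 M] [FiniteDimensional 𝕜 M]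
  [AddCommGroup M'] [Module 𝕜 M'] [FiniteDimensional 𝕜 M']

/-- A subspace on which `Q ∘ f` is positive definite meets `ker f` trivially, so `f` maps it
isomorphically onto a subspace on which `Q` is positive definite. -/
lemma sigPos_comp_le (Q : QuadraticForm 𝕜 M') (f : M →ₗ[𝕜] M') :
    sigPos (Q.comp f) ≤ sigPos Q := by
  obtain ⟨V, hVrank, hV⟩ := exists_finrank_eq_sigPos_and_posDef (Q.comp f)
  have hinj : Function.Injective (f ∘ₗ V.subtype) := by
    rw [← LinearMap.ker_eq_bot, Submodule.eq_bot_iff]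
    intro x hx
    by_contra hx0
    have := hV x hx0
    simp_all [restrict_apply]
  rw [← hVrank, ← LinearMap.finrank_range_of_inj hinj, LinearMap.range_comp,
    Submodule.range_subtype]
  refine le_sigPos_of_posDef Q ?_
  rintro ⟨_, x, hx, rfl⟩ hx0
  exact hV ⟨x, hx⟩ (by rintro ⟨⟩; simp at hx0)

lemma sigNeg_comp_le (Q : QuadraticForm 𝕜 M') (f : M →ₗ[𝕜] M') :
    sigNeg (Q.comp f) ≤ sigNeg Q :=
  sigPos_comp_le (-Q) f

lemma sigPos_eq_of_comp_eq {Q : QuadraticForm 𝕜 M} {Q' : QuadraticForm 𝕜 M'}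
    {f : M →ₗ[𝕜] M'} {g : M' →ₗ[𝕜] M} (hf : Q'.comp f = Q) (hg : Q.comp g = Q') :
    sigPos Q = sigPos Q' :=
  le_antisymm (hf ▸ sigPos_comp_le Q' f) (hg ▸ sigPos_comp_le Q g)

lemma sigNeg_eq_of_comp_eq {Q : QuadraticForm 𝕜 M} {Q' : QuadraticForm 𝕜 M'}
    {f : M →ₗ[𝕜] M'} {g : M' →ₗ[𝕜] M} (hf : Q'.comp f = Q) (hg : Q.comp g = Q') :
    sigNeg Q = sigNeg Q' :=
  le_antisymm (hf ▸ sigNeg_comp_le Q' f) (hg ▸ sigNeg_comp_le Q g)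

end QuadraticForm

namespace Matrix

lemma fromRows_mul_inv_one_mul_toRows₂ {R l κ : Type*} [Field R] [Fintype κ] [DecidableEq κ]
    {Z : Matrix (l ⊕ κ) κ R} (hZ : IsUnit Z.toRows₂) :
    fromRows (Z.toRows₁ * Z.toRows₂⁻¹) 1 * Z.toRows₂ = Z := by
  rw [fromRows_mul, Matrix.mul_assoc, nonsing_inv_mul _ ((isUnit_iff_isUnit_det _).mp hZ),
    Matrix.mul_one, Matrix.one_mul, fromRows_toRows]

variable {R ι κ : Type*} [Fintype ι] [Fintype κ]

section CommRing
variable [CommRing R]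

lemma toQuadraticForm'_apply [DecidableEq ι] (A : Matrix ι ι R) (x : ι → R) :
    A.toQuadraticForm' x = x ⬝ᵥ A *ᵥ x := by
  simp [toQuadraticForm', toLinearMap₂'_apply']

lemma toQuadraticForm'_comp_mulVecLin [DecidableEq ι] [DecidableEq κ] (A : Matrix ι ι R)
    (P : Matrix ι κ R) :
    A.toQuadraticForm'.comp P.mulVecLin = (Pᵀ * A * P).toQuadraticForm' := by
  ext x
  simp only [QuadraticMap.comp_apply, toQuadraticForm'_apply, mulVecLin_apply, ← mulVec_mulVec,
    dotProduct_mulVec _ Pᵀ, vecMul_transpose]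

lemma toQuadraticForm'_diagonal [DecidableEq ι] (w : ι → R) :
    (diagonal w).toQuadraticForm' = weightedSumSquares R w := by
  ext x
  simp [toQuadraticForm'_apply, weightedSumSquares_apply, dotProduct, mulVec_diagonal,
    mul_left_comm]

lemma mul_eq_zero_iff_range_mulVecLin_le_ker {l : Type*} [DecidableEq κ] {A : Matrix l ι R}
    {B : Matrix ι κ R} :
    A * B = 0 ↔ LinearMap.range B.mulVecLin ≤ LinearMap.ker A.mulVecLin := by
  rw [LinearMap.range_le_ker_iff, ← mulVecLin_mul, ← toLin'_apply', LinearEquiv.map_eq_zero_iff]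

variable {S : Matrix (ι ⊕ κ) (ι ⊕ κ) R} {W : Matrix ι κ R}

lemma eq_fromBlocks_of_mul_fromRows_eq_zero [DecidableEq κ] (hS : S.IsSymm)
    (hW : S * fromRows W (1 : Matrix κ κ R) = 0) :
    S = fromBlocks S.toBlocks₁₁ (-(S.toBlocks₁₁ * W)) (-(Wᵀ * S.toBlocks₁₁))
      (Wᵀ * S.toBlocks₁₁ * W) := by
  obtain ⟨h₁₁, h₁₂, -, -⟩ := isSymm_fromBlocks_iff.mp ((fromBlocks_toBlocks S).symm ▸ hS)
  rw [← fromBlocks_toBlocks S, fromBlocks_mul_fromRows, ← fromRows_zero, fromRows_ext_iff,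
    Matrix.mul_one, Matrix.mul_one, add_eq_zero_iff_eq_neg', add_eq_zero_iff_eq_neg'] at hW
  obtain ⟨h₁, h₂⟩ := hW
  have h₃ : S.toBlocks₂₁ = -(Wᵀ * S.toBlocks₁₁) := by
    rw [← h₁₂, h₁, transpose_neg, transpose_mul, h₁₁.eq]
  conv_lhs => rw [← fromBlocks_toBlocks S, h₁, h₃, h₂, h₃]
  simp [Matrix.mul_assoc]

lemma transpose_fromRows_one_zero_mul_mul_fromRows_one_zero [DecidableEq ι] :
    (fromRows (1 : Matrix ι ι R) (0 : Matrix κ ι R))ᵀ * S *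
      (fromRows 1 0 : Matrix (ι ⊕ κ) ι R) = S.toBlocks₁₁ := by
  rw [← fromBlocks_toBlocks S, transpose_fromRows, Matrix.mul_assoc, fromBlocks_mul_fromRows,
    fromCols_mul_fromRows]
  simp

lemma transpose_fromCols_one_neg_mul_toBlocks₁₁_mul_fromCols_one_neg [DecidableEq ι]
    [DecidableEq κ] (hS : S.IsSymm) (hW : S * fromRows W (1 : Matrix κ κ R) = 0) :
    (fromCols (1 : Matrix ι ι R) (-W))ᵀ * S.toBlocks₁₁ *
      (fromCols 1 (-W) : Matrix ι (ι ⊕ κ) R) = S := by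
  conv_rhs => rw [eq_fromBlocks_of_mul_fromRows_eq_zero hS hW]
  rw [transpose_fromCols, fromRows_mul, fromRows_mul_fromCols, ← fromRows_fromCols_eq_fromBlocks]
  simp [Matrix.mul_assoc]

end CommRing

section Field
variable [Field R] [DecidableEq ι] [DecidableEq κ] {S : Matrix (ι ⊕ κ) (ι ⊕ κ) R}
  {W : Matrix ι κ R}

lemma isUnit_toBlocks₁₁ (hS : S.IsSymm) (hW : S * fromRows W (1 : Matrix κ κ R) = 0)
    (hker : LinearMap.ker S.mulVecLin ≤
      LinearMap.range (fromRows W (1 : Matrix κ κ R)).mulVecLin) :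
    IsUnit S.toBlocks₁₁ := by
  refine mulVec_injective_iff_isUnit.mp
    ((injective_iff_map_eq_zero S.toBlocks₁₁.mulVecLin).mpr fun u hu => ?_)
  rw [mulVecLin_apply] at hu
  have hSu : S *ᵥ Sum.elim u 0 = 0 := by
    rw [eq_fromBlocks_of_mul_fromRows_eq_zero hS hW, fromBlocks_mulVec]
    simp [neg_mulVec, ← mulVec_mulVec, hu]
  obtain ⟨c, hc⟩ := hker hSu
  rw [mulVecLin_apply, fromRows_mulVec, one_mulVec, Sum.elim_eq_iff] at hc
  rw [← hc.1, hc.2, mulVec_zero]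

variable [LinearOrder R]

lemma sigPos_toQuadraticForm'_eq_of_congr {A : Matrix ι ι R} {B : Matrix κ κ R}
    {P : Matrix ι κ R} {P' : Matrix κ ι R} (hP : Pᵀ * A * P = B) (hP' : P'ᵀ * B * P' = A) :
    sigPos A.toQuadraticForm' = sigPos B.toQuadraticForm' :=
  QuadraticForm.sigPos_eq_of_comp_eq (f := P'.mulVecLin) (g := P.mulVecLin)
    (by rw [toQuadraticForm'_comp_mulVecLin, hP']) (by rw [toQuadraticForm'_comp_mulVecLin, hP])

lemma sigNeg_toQuadraticForm'_eq_of_congr {A : Matrix ι ι R} {B : Matrix κ κ R}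
    {P : Matrix ι κ R} {P' : Matrix κ ι R} (hP : Pᵀ * A * P = B) (hP' : P'ᵀ * B * P' = A) :
    sigNeg A.toQuadraticForm' = sigNeg B.toQuadraticForm' :=
  QuadraticForm.sigNeg_eq_of_comp_eq (f := P'.mulVecLin) (g := P.mulVecLin)
    (by rw [toQuadraticForm'_comp_mulVecLin, hP']) (by rw [toQuadraticForm'_comp_mulVecLin, hP])

lemma sigPos_toQuadraticForm'_toBlocks₁₁ (hS : S.IsSymm)
    (hW : S * fromRows W (1 : Matrix κ κ R) = 0) :
    sigPos S.toBlocks₁₁.toQuadraticForm' = sigPos S.toQuadraticForm' :=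
  sigPos_toQuadraticForm'_eq_of_congr
    (transpose_fromCols_one_neg_mul_toBlocks₁₁_mul_fromCols_one_neg hS hW)
    transpose_fromRows_one_zero_mul_mul_fromRows_one_zero

lemma sigNeg_toQuadraticForm'_toBlocks₁₁ (hS : S.IsSymm)
    (hW : S * fromRows W (1 : Matrix κ κ R) = 0) :
    sigNeg S.toBlocks₁₁.toQuadraticForm' = sigNeg S.toQuadraticForm' :=
  sigNeg_toQuadraticForm'_eq_of_congr
    (transpose_fromCols_one_neg_mul_toBlocks₁₁_mul_fromCols_one_neg hS hW)
    transpose_fromRows_one_zero_mul_mul_fromRows_one_zero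

end Field

namespace IsHermitian

variable [DecidableEq ι] {A : Matrix ι ι ℝ}

lemma transpose_eigenvectorUnitary_mul_mul (hA : A.IsHermitian) :
    (hA.eigenvectorUnitary : Matrix ι ι ℝ)ᵀ * A * hA.eigenvectorUnitary =
      diagonal hA.eigenvalues := by
  simpa [Unitary.conjStarAlgAut_apply, star_eq_conjTranspose,
    conjTranspose_eq_transpose_of_trivial] using hA.conjStarAlgAut_star_eigenvectorUnitary

lemma eigenvectorUnitary_mul_diagonal_mul_transpose (hA : A.IsHermitian) :
    (hA.eigenvectorUnitary : Matrix ι ι ℝ)ᵀᵀ * diagonal hA.eigenvalues *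
      (hA.eigenvectorUnitary : Matrix ι ι ℝ)ᵀ = A := by
  simpa [Unitary.conjStarAlgAut_apply, star_eq_conjTranspose,
    conjTranspose_eq_transpose_of_trivial] using hA.spectral_theorem.symm

lemma sigPos_toQuadraticForm' (hA : A.IsHermitian) :
    sigPos A.toQuadraticForm' = Nat.card {i // 0 < hA.eigenvalues i} := by
  rw [sigPos_toQuadraticForm'_eq_of_congr hA.transpose_eigenvectorUnitary_mul_mul
    hA.eigenvectorUnitary_mul_diagonal_mul_transpose, toQuadraticForm'_diagonal,
    QuadraticForm.sigPos_weightedSumSquares]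
  rfl

lemma sigNeg_toQuadraticForm' (hA : A.IsHermitian) :
    sigNeg A.toQuadraticForm' = Nat.card {i // hA.eigenvalues i < 0} := by
  rw [sigNeg_toQuadraticForm'_eq_of_congr hA.transpose_eigenvectorUnitary_mul_mul
    hA.eigenvectorUnitary_mul_diagonal_mul_transpose, toQuadraticForm'_diagonal,
    QuadraticForm.sigNeg_weightedSumSquares]
  rfl

end IsHermitian

end Matrix

theorem stmt6_general {m n3 : ℕ}
    (S : Matrix (Fin m ⊕ Fin n3) (Fin m ⊕ Fin n3) ℝ) (hS : S.IsHermitian)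
    (Z : Matrix (Fin m ⊕ Fin n3) (Fin n3) ℝ)
    (hspan : LinearMap.range Z.mulVecLin = LinearMap.ker S.mulVecLin)
    (hY2 : IsUnit (Z.submatrix (Sum.inr : Fin n3 → Fin m ⊕ Fin n3) id)) :
    IsUnit S.toBlocks₁₁ ∧
    ∀ h11 : S.toBlocks₁₁.IsHermitian,
      Nat.card {i // 0 < h11.eigenvalues i} = Nat.card {i // 0 < hS.eigenvalues i} ∧
      Nat.card {i // h11.eigenvalues i < 0} = Nat.card {i // hS.eigenvalues i < 0} := by
  set N := fromRows (Z.toRows₁ * Z.toRows₂⁻¹) (1 : Matrix (Fin n3) (Fin n3) ℝ)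
  have hZ : N * Z.toRows₂ = Z := fromRows_mul_inv_one_mul_toRows₂ hY2
  have hker : LinearMap.ker S.mulVecLin ≤ LinearMap.range N.mulVecLin := by
    rw [← hspan, ← hZ, mulVecLin_mul]
    exact LinearMap.range_comp_le_range _ _
  have hN : S * N = 0 := by
    rw [← Matrix.mul_one N,
      ← mul_nonsing_inv Z.toRows₂ ((Matrix.isUnit_iff_isUnit_det _).mp hY2),
      ← Matrix.mul_assoc N, hZ, ← Matrix.mul_assoc,
      mul_eq_zero_iff_range_mulVecLin_le_ker.mpr hspan.le, Matrix.zero_mul]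
  have hSymm : S.IsSymm := isHermitian_iff_isSymm.mp hS
  refine ⟨isUnit_toBlocks₁₁ hSymm hN hker, fun h11 => ⟨?_, ?_⟩⟩
  · rw [← h11.sigPos_toQuadraticForm', ← hS.sigPos_toQuadraticForm',
      sigPos_toQuadraticForm'_toBlocks₁₁ hSymm hN]
  · rw [← h11.sigNeg_toQuadraticForm', ← hS.sigNeg_toQuadraticForm',
      sigNeg_toQuadraticForm'_toBlocks₁₁ hSymm hN]

/-- Let S be symmetric on ℝ^{(n-n₃)+n₃} with dim N(S) = n₃ and Z a basis
of N(S) partitioned as Z = [Y₁; Y₂] with Y₂ invertible.  Then the leading principal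
block S₁₁ is nonsingular and has the same numbers of positive and negative eigenvalues
as S. -/
theorem stmt6 {m n3 : ℕ}
    (S : Matrix (Fin m ⊕ Fin n3) (Fin m ⊕ Fin n3) ℝ) (hS : S.IsHermitian)
    (hdim : Module.finrank ℝ (LinearMap.ker S.mulVecLin) = n3)
    (Z : Matrix (Fin m ⊕ Fin n3) (Fin n3) ℝ)
    (hind : LinearIndependent ℝ Zᵀ)
    (hspan : LinearMap.range Z.mulVecLin = LinearMap.ker S.mulVecLin)
    (hY2 : IsUnit (Z.submatrix (Sum.inr : Fin n3 → Fin m ⊕ Fin n3) id)) :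
    IsUnit S.toBlocks₁₁ ∧
    ∀ h11 : S.toBlocks₁₁.IsHermitian,
      Nat.card {i // 0 < h11.eigenvalues i} = Nat.card {i // 0 < hS.eigenvalues i} ∧
      Nat.card {i // h11.eigenvalues i < 0} = Nat.card {i // hS.eigenvalues i < 0} :=
  stmt6_general S hS Z hspan hY2
end

section
/- Let A, B ∈ ℝ^{n×n} be symmetric with B positive semi-definite. Then there exists an invertible W ∈ ℝ^{n×n} such that W^T B W is a 0-1 diagonal matrix and W^T A W is block diagonal of the form diag(S, Λ_1, Λ_2, 0), where S = I_{n_0} ⊗ [[0,1],[1,0]], Λ_1 and Λ_2 are real diagonal, Λ_2 is invertible, and W^T B W = diag(I_{n_0} ⊗ [[1,0],[0,0]], I_{n_1}, 0, 0) conformally. -/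
/-!
Normalise `B` first: by the spectral theorem and a diagonal rescaling, `(A, B)` is congruent to a
pencil with `B = diag(I, 0)`. Diagonalising orthogonally the block of `A` on the kernel of `B`, its
nonzero eigenvalues `D` split off through a Schur complement and give `Λ₂`. What is left is
`([[G, E], [Eᵀ, 0]], diag(I, 0))`. An orthogonal change of the first block and an arbitrary one of
the second bring `E` to `[[I, 0], [0, 0]]`; this identity coupling then absorbs the matching rows
of `G`, producing the hyperbolic pairs `[[0, 1], [1, 0]]`, and the rest of `G` is diagonalised
orthogonally to give `Λ₁`.
-/

open Matrix Kronecker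

theorem Matrix.card_le_of_mul_eq_one {ι κ R : Type*} [Fintype ι] [DecidableEq ι] [Fintype κ]
    [CommSemiring R] [StrongRankCondition R] {X : Matrix ι κ R} {Y : Matrix κ ι R}
    (h : X * Y = 1) : Fintype.card ι ≤ Fintype.card κ :=
  calc Fintype.card ι = (X * Y).rank := by rw [h, rank_one]
    _ ≤ X.rank := rank_mul_le_left X Y
    _ ≤ Fintype.card κ := rank_le_card_width X

theorem Matrix.IsSymm.exists_eq_fromBlocks {α β R : Type*} {M : Matrix (α ⊕ β) (α ⊕ β) R}
    (h : M.IsSymm) :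
    ∃ (A : Matrix α α R) (B : Matrix α β R) (D : Matrix β β R),
      A.IsSymm ∧ D.IsSymm ∧ M = Matrix.fromBlocks A B Bᵀ D := by
  obtain ⟨hA, hB, -, hD⟩ := isSymm_fromBlocks_iff.mp ((fromBlocks_toBlocks M).symm ▸ h)
  exact ⟨_, _, _, hA, hD, by rw [hB, fromBlocks_toBlocks]⟩

theorem Matrix.submatrix_inr_eq_zero_of_mul_transpose_eq_fromBlocks {α β γ : Type*} [Fintype γ]
    {M : Matrix (α ⊕ β) γ ℝ} {X : Matrix α α ℝ} (h : M * Mᵀ = fromBlocks X 0 0 0) :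
    M.submatrix Sum.inr id = 0 := by
  rw [← self_mul_conjTranspose_eq_zero, conjTranspose_eq_transpose_of_trivial,
    transpose_submatrix, ← submatrix_mul _ _ _ _ _ Function.bijective_id, h]
  rfl

theorem Matrix.eq_fromBlocks_of_mul_transpose_eq_fromBlocks {α β γ δ : Type*} [Fintype α]
    [Fintype β] [Fintype γ] [Fintype δ] {M : Matrix (α ⊕ β) (γ ⊕ δ) ℝ}
    {X : Matrix α α ℝ} {Y : Matrix γ γ ℝ} (hX : M * Mᵀ = fromBlocks X 0 0 0)
    (hY : Mᵀ * M = fromBlocks Y 0 0 0) : M = fromBlocks M.toBlocks₁₁ 0 0 0 := by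
  have hrows := congrFun (submatrix_inr_eq_zero_of_mul_transpose_eq_fromBlocks hX)
  have hcols := congrFun (submatrix_inr_eq_zero_of_mul_transpose_eq_fromBlocks
    (M := Mᵀ) (by rwa [transpose_transpose]))
  ext (i | i) (j | j)
  · rfl
  · exact congrFun (hcols j) (Sum.inl i)
  · exact congrFun (hrows i) (Sum.inl j)
  · exact congrFun (hrows i) (Sum.inr j)

variable {ι κ μ : Type*} [Fintype ι] [DecidableEq ι] [Fintype κ] [DecidableEq κ]
  [Fintype μ] [DecidableEq μ]

theorem Matrix.IsSymm.exists_orthogonal_diagonal {M : Matrix ι ι ℝ} (hM : M.IsSymm) :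
    ∃ (U : Matrix ι ι ℝ) (d : ι → ℝ), Uᵀ * U = 1 ∧ U * Uᵀ = 1 ∧ Uᵀ * M * U = diagonal d := by
  have hH : M.IsHermitian := isHermitian_iff_isSymm.mpr hM
  have hU := hH.eigenvectorUnitary.2
  have hdiag := hH.conjStarAlgAut_star_eigenvectorUnitary
  rw [Unitary.conjStarAlgAut_star_apply] at hdiag
  refine ⟨hH.eigenvectorUnitary, hH.eigenvalues, ?_, ?_, ?_⟩
  · simpa [star_eq_conjTranspose] using mem_unitaryGroup_iff'.mp hU
  · simpa [star_eq_conjTranspose] using mem_unitaryGroup_iff.mp hU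
  · simpa [star_eq_conjTranspose] using hdiag

theorem exists_equiv_diagonal_submatrix_eq_fromBlocks (f : ι → ℝ) :
    ∃ (p q : ℕ) (e : Fin p ⊕ Fin q ≃ ι) (d : Fin p → ℝ),
      (∀ i, d i ≠ 0) ∧ (diagonal f).submatrix e e = fromBlocks (diagonal d) 0 0 0 := by
  let e : Fin _ ⊕ Fin _ ≃ ι := ((Fintype.equivFin {i // f i ≠ 0}).symm.sumCongr
    (Fintype.equivFin {i // ¬ f i ≠ 0}).symm).trans (Equiv.sumCompl _)
  refine ⟨_, _, e, fun i ↦ f (e (Sum.inl i)), fun i ↦ ?_, ?_⟩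
  · simpa [e] using ((Fintype.equivFin {i // f i ≠ 0}).symm i).2
  · rw [submatrix_diagonal_equiv, ← diagonal_zero, fromBlocks_diagonal]
    congr 1
    ext (i | i)
    · rfl
    · simpa [e] using ((Fintype.equivFin {i // ¬ f i ≠ 0}).symm i).2

theorem Matrix.IsSymm.exists_orthogonal_fromBlocks {M : Matrix ι ι ℝ} (hM : M.IsSymm) :
    ∃ (p q : ℕ) (U : Matrix ι (Fin p ⊕ Fin q) ℝ) (d : Fin p → ℝ),
      Uᵀ * U = 1 ∧ U * Uᵀ = 1 ∧ (∀ i, d i ≠ 0) ∧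
        Uᵀ * M * U = Matrix.fromBlocks (diagonal d) 0 0 0 := by
  obtain ⟨U, f, hUU, hUU', hUMU⟩ := hM.exists_orthogonal_diagonal
  obtain ⟨p, q, e, d, hd, hfd⟩ := exists_equiv_diagonal_submatrix_eq_fromBlocks f
  refine ⟨p, q, U.submatrix id e, d, ?_, ?_, hd, ?_⟩
  · rw [transpose_submatrix, ← submatrix_mul _ _ _ _ _ Function.bijective_id, hUU,
      submatrix_one_equiv]
  · rw [transpose_submatrix, submatrix_mul_equiv, hUU', submatrix_id_id]
  · rw [← hfd, ← hUMU, transpose_submatrix]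
    conv_lhs => rw [← submatrix_id_id M]
    rw [← submatrix_mul _ _ _ _ _ Function.bijective_id,
      ← submatrix_mul _ _ _ _ _ Function.bijective_id]

/-- The invertible `W` may change the index type, so that each normalisation step can refine the
block structure. -/
def PencilCongr (A B : Matrix ι ι ℝ) (A' B' : Matrix κ κ ℝ) : Prop :=
  ∃ (W : Matrix ι κ ℝ) (V : Matrix κ ι ℝ),
    W * V = 1 ∧ V * W = 1 ∧ Wᵀ * A * W = A' ∧ Wᵀ * B * W = B'

namespace PencilCongr

theorem of_conj {W : Matrix ι κ ℝ} {V : Matrix κ ι ℝ} (hWV : W * V = 1) (hVW : V * W = 1)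
    (A B : Matrix ι ι ℝ) : PencilCongr A B (Wᵀ * A * W) (Wᵀ * B * W) :=
  ⟨W, V, hWV, hVW, rfl, rfl⟩

theorem refl (A B : Matrix ι ι ℝ) : PencilCongr A B A B :=
  ⟨1, 1, Matrix.one_mul 1, Matrix.one_mul 1, by simp, by simp⟩

variable {A B : Matrix ι ι ℝ} {A' B' : Matrix κ κ ℝ} {A'' B'' : Matrix μ μ ℝ}

theorem symm (h : PencilCongr A B A' B') : PencilCongr A' B' A B := by
  obtain ⟨W, V, hWV, hVW, rfl, rfl⟩ := h
  refine ⟨V, W, hVW, hWV, ?_, ?_⟩ <;>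
    rw [← Matrix.mul_assoc, ← Matrix.mul_assoc, ← transpose_mul, Matrix.mul_assoc, hWV,
      transpose_one, Matrix.one_mul, Matrix.mul_one]

theorem trans (h₁ : PencilCongr A B A' B') (h₂ : PencilCongr A' B' A'' B'') :
    PencilCongr A B A'' B'' := by
  obtain ⟨W, V, hWV, hVW, rfl, rfl⟩ := h₁
  obtain ⟨W', V', hWV', hVW', rfl, rfl⟩ := h₂
  refine ⟨W * W', V' * V, ?_, ?_, ?_, ?_⟩
  · rw [Matrix.mul_assoc, ← Matrix.mul_assoc W', hWV', Matrix.one_mul, hWV]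
  · rw [Matrix.mul_assoc, ← Matrix.mul_assoc V, hVW, Matrix.one_mul, hVW']
  all_goals simp only [transpose_mul, Matrix.mul_assoc]

theorem isSymm (h : PencilCongr A B A' B') (hA : A.IsSymm) : A'.IsSymm := by
  obtain ⟨W, V, -, -, rfl, -⟩ := h
  simp only [IsSymm, transpose_mul, transpose_transpose, hA.eq, Matrix.mul_assoc]

theorem submatrix (e : κ ≃ ι) : PencilCongr A B (A.submatrix e e) (B.submatrix e e) := by
  refine ⟨(1 : Matrix ι ι ℝ).submatrix id e, (1 : Matrix ι ι ℝ).submatrix e id, ?_, ?_, ?_, ?_⟩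
  · rw [← submatrix_mul _ _ _ _ _ e.bijective, Matrix.one_mul, submatrix_id_id]
  · rw [← submatrix_mul _ _ _ _ _ Function.bijective_id, Matrix.one_mul, submatrix_one_equiv]
  all_goals
    rw [transpose_submatrix, transpose_one]
    ext i j
    simp [Matrix.mul_apply, one_apply]

theorem fromBlocks {ι₂ κ₂ : Type*} [Fintype ι₂] [DecidableEq ι₂] [Fintype κ₂] [DecidableEq κ₂]
    {A₂ B₂ : Matrix ι₂ ι₂ ℝ} {A₂' B₂' : Matrix κ₂ κ₂ ℝ}
    (h₁ : PencilCongr A B A' B') (h₂ : PencilCongr A₂ B₂ A₂' B₂') :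
    PencilCongr (fromBlocks A 0 0 A₂) (fromBlocks B 0 0 B₂)
      (fromBlocks A' 0 0 A₂') (fromBlocks B' 0 0 B₂') := by
  obtain ⟨W, V, hWV, hVW, rfl, rfl⟩ := h₁
  obtain ⟨W₂, V₂, hWV₂, hVW₂, rfl, rfl⟩ := h₂
  refine ⟨Matrix.fromBlocks W 0 0 W₂, Matrix.fromBlocks V 0 0 V₂, ?_, ?_, ?_, ?_⟩ <;>
    simp [fromBlocks_transpose, fromBlocks_multiply, hWV, hVW, hWV₂, hVW₂]

theorem card_eq (h : PencilCongr A B A' B') : Fintype.card κ = Fintype.card ι := by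
  obtain ⟨W, V, hWV, hVW, -, -⟩ := h
  exact le_antisymm (card_le_of_mul_eq_one hVW) (card_le_of_mul_eq_one hWV)

theorem exists_isUnit (h : PencilCongr A B A' B') :
    ∃ (e : κ ≃ ι) (W : Matrix ι ι ℝ),
      IsUnit W ∧ (Wᵀ * A * W).submatrix e e = A' ∧ (Wᵀ * B * W).submatrix e e = B' := by
  let e := Fintype.equivOfCardEq h.card_eq
  obtain ⟨W, V, hWV, -, hA, hB⟩ := h.trans (submatrix (A := A') (B := B') e.symm)
  refine ⟨e, W, IsUnit.of_mul_eq_one V hWV, ?_, ?_⟩ <;> simp [hA, hB]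

end PencilCongr

theorem exists_pencilCongr_fromBlocks_one_of_pos {p q : Type*} [Fintype p] [DecidableEq p]
    [Fintype q] [DecidableEq q] (A : Matrix (p ⊕ q) (p ⊕ q) ℝ) {d : p → ℝ} (hd : ∀ i, 0 < d i) :
    ∃ A' : Matrix (p ⊕ q) (p ⊕ q) ℝ,
      PencilCongr A (fromBlocks (diagonal d) 0 0 0) A' (fromBlocks 1 0 0 0) := by
  have hsqrt (i : p) : √(d i) ≠ 0 := (Real.sqrt_pos.mpr (hd i)).ne'
  let S : Matrix (p ⊕ q) (p ⊕ q) ℝ := fromBlocks (diagonal fun i ↦ (√(d i))⁻¹) 0 0 1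
  let S' : Matrix (p ⊕ q) (p ⊕ q) ℝ := fromBlocks (diagonal fun i ↦ √(d i)) 0 0 1
  refine ⟨Sᵀ * A * S, S, S', ?_, ?_, rfl, ?_⟩
  · simp [S, S', fromBlocks_multiply, hsqrt]
  · simp [S, S', fromBlocks_multiply, hsqrt]
  · have h (i : p) : (√(d i))⁻¹ * d i * (√(d i))⁻¹ = 1 := by
      have := Real.mul_self_sqrt (hd i).le
      field_simp [hsqrt i]
      linarith
    simp [S, fromBlocks_transpose, fromBlocks_multiply, h]

theorem Matrix.PosSemidef.exists_pencilCongr (A : Matrix ι ι ℝ) {B : Matrix ι ι ℝ}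
    (hB : B.PosSemidef) :
    ∃ (r s : ℕ) (A' : Matrix (Fin r ⊕ Fin s) (Fin r ⊕ Fin s) ℝ),
      PencilCongr A B A' (fromBlocks 1 0 0 0) := by
  obtain ⟨r, s, U, d, hUU, hUU', hd, hUBU⟩ :=
    (isHermitian_iff_isSymm.mp hB.isHermitian).exists_orthogonal_fromBlocks
  have hd_pos (i : Fin r) : 0 < d i := by
    have h := (hB.conjTranspose_mul_mul_same U).diag_nonneg (i := Sum.inl i)
    rw [conjTranspose_eq_transpose_of_trivial, hUBU] at h
    exact (hd i).symm.lt_of_le (by simpa using h)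
  obtain ⟨A', hA'⟩ := exists_pencilCongr_fromBlocks_one_of_pos (Uᵀ * A * U) hd_pos
  exact ⟨r, s, A', (hUBU ▸ PencilCongr.of_conj hUU' hUU A B).trans hA'⟩

section Blocks

variable {α α' β β' γ : Type*} [Fintype α] [DecidableEq α] [Fintype α'] [DecidableEq α']
  [Fintype β] [DecidableEq β] [Fintype β'] [DecidableEq β'] [Fintype γ] [DecidableEq γ]

theorem pencilCongr_fromBlocks_conj {P : Matrix α α' ℝ} {Q : Matrix β β' ℝ} {Q' : Matrix β' β ℝ}
    (hP : Pᵀ * P = 1) (hP' : P * Pᵀ = 1) (hQ : Q * Q' = 1) (hQ' : Q' * Q = 1)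
    (G : Matrix α α ℝ) (E : Matrix α β ℝ) (F : Matrix β β ℝ) :
    PencilCongr (fromBlocks G E Eᵀ F) (fromBlocks 1 0 0 0)
      (fromBlocks (Pᵀ * G * P) (Pᵀ * E * Q) (Pᵀ * E * Q)ᵀ (Qᵀ * F * Q)) (fromBlocks 1 0 0 0) := by
  refine ⟨fromBlocks P 0 0 Q, fromBlocks Pᵀ 0 0 Q', ?_, ?_, ?_, ?_⟩ <;>
    simp [fromBlocks_transpose, fromBlocks_multiply, hP, hP', hQ, hQ', Matrix.mul_assoc]

theorem pencilCongr_schur (G : Matrix α α ℝ) (K : Matrix α β ℝ) {D : Matrix β β ℝ}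
    [Invertible D] (hD : D.IsSymm) (B : Matrix α α ℝ) :
    PencilCongr (fromBlocks G K Kᵀ D) (fromBlocks B 0 0 0)
      (fromBlocks (G - K * ⅟D * Kᵀ) 0 0 D) (fromBlocks B 0 0 0) := by
  let X := ⅟D * Kᵀ
  have hXt : Xᵀ = K * ⅟D := by simp [X, transpose_nonsing_inv, hD.eq]
  refine PencilCongr.symm ⟨fromBlocks 1 0 X 1, fromBlocks 1 0 (-X) 1, ?_, ?_, ?_, ?_⟩
  · simp [fromBlocks_multiply]
  · simp [fromBlocks_multiply]
  · rw [fromBlocks_transpose, hXt, fromBlocks_eq_of_invertible₂₂ G K Kᵀ D]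
    simp [X]
  · simp [fromBlocks_transpose, fromBlocks_multiply]

theorem pencilCongr_split_invertible (G : Matrix α α ℝ) (K₁ : Matrix α β ℝ) (K₂ : Matrix α γ ℝ)
    {D : Matrix β β ℝ} [Invertible D] (hD : D.IsSymm) :
    PencilCongr (fromBlocks G (fromCols K₁ K₂) (fromCols K₁ K₂)ᵀ (fromBlocks D 0 0 0))
      (fromBlocks 1 0 0 0)
      (fromBlocks (fromBlocks (G - K₁ * ⅟D * K₁ᵀ) K₂ K₂ᵀ 0) 0 0 D)
      (fromBlocks (fromBlocks 1 0 0 0) 0 0 0) := by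
  let e : (α ⊕ γ) ⊕ β ≃ α ⊕ (β ⊕ γ) :=
    (Equiv.sumAssoc _ _ _).trans ((Equiv.refl _).sumCongr (Equiv.sumComm _ _))
  have hA : (fromBlocks G (fromCols K₁ K₂) (fromCols K₁ K₂)ᵀ (fromBlocks D 0 0 0)).submatrix e e =
      fromBlocks (fromBlocks G K₂ K₂ᵀ 0) (fromRows K₁ 0) (fromRows K₁ 0)ᵀ D := by
    ext ((i | i) | i) ((j | j) | j) <;> simp [e]
  have hB : (fromBlocks 1 0 0 0 : Matrix (α ⊕ (β ⊕ γ)) (α ⊕ (β ⊕ γ)) ℝ).submatrix e e =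
      fromBlocks (fromBlocks 1 0 0 0) 0 0 0 := by
    ext ((i | i) | i) ((j | j) | j) <;> simp [e, one_apply]
  have hS : fromBlocks G K₂ K₂ᵀ 0 - fromRows K₁ 0 * ⅟D * (fromRows K₁ 0)ᵀ =
      fromBlocks (G - K₁ * ⅟D * K₁ᵀ) K₂ K₂ᵀ 0 := by
    simp only [transpose_fromRows, fromRows_mul, transpose_zero, Matrix.zero_mul, mul_fromCols,
      Matrix.mul_zero]
    ext (i | i) (j | j) <;> simp
  have h := PencilCongr.submatrix (A := fromBlocks G (fromCols K₁ K₂) (fromCols K₁ K₂)ᵀ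
    (fromBlocks D 0 0 0)) (B := fromBlocks 1 0 0 0) e
  rw [hA, hB] at h
  simpa only [hS] using h.trans (pencilCongr_schur _ _ hD _)

theorem pencilCongr_hyperbolic_elim {G₁₁ : Matrix α α ℝ} (hG₁₁ : G₁₁.IsSymm)
    (G₁₂ : Matrix α β ℝ) (G₂₂ : Matrix β β ℝ) :
    let J : Matrix (α ⊕ β) (α ⊕ γ) ℝ := fromBlocks 1 0 0 0
    PencilCongr (fromBlocks (fromBlocks G₁₁ G₁₂ G₁₂ᵀ G₂₂) J Jᵀ 0) (fromBlocks 1 0 0 0)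
      (fromBlocks (fromBlocks 0 0 0 G₂₂) J Jᵀ 0) (fromBlocks 1 0 0 0) := by
  intro J
  -- `W = [[1, 0], [X, 1]]` adds `J X + (J X)ᵀ` to the upper left block, which is
  -- `[[-G₁₁, -G₁₂], [-G₁₂ᵀ, 0]]`: `-½ G₁₁` is counted twice.
  let X : Matrix (α ⊕ γ) (α ⊕ β) ℝ := fromBlocks (-(2⁻¹ : ℝ) • G₁₁) (-G₁₂) 0 0
  refine ⟨fromBlocks 1 0 X 1, fromBlocks 1 0 (-X) 1, ?_, ?_, ?_, ?_⟩
  · simp [fromBlocks_multiply]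
  · simp [fromBlocks_multiply]
  · simp [X, J, fromBlocks_transpose, fromBlocks_multiply, fromBlocks_add, hG₁₁.eq]
    module
  · simp [fromBlocks_transpose, fromBlocks_multiply]

end Blocks

theorem exists_pencilCongr_split_regular {r s : ℕ}
    {A : Matrix (Fin r ⊕ Fin s) (Fin r ⊕ Fin s) ℝ} (hA : A.IsSymm) :
    ∃ (p q : ℕ) (G : Matrix (Fin r) (Fin r) ℝ) (E : Matrix (Fin r) (Fin q) ℝ) (d : Fin p → ℝ),
      G.IsSymm ∧ (∀ i, d i ≠ 0) ∧
      PencilCongr A (fromBlocks 1 0 0 0)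
        (fromBlocks (fromBlocks G E Eᵀ 0) 0 0 (diagonal d))
        (fromBlocks (fromBlocks 1 0 0 0) 0 0 0) := by
  obtain ⟨A₁₁, A₁₂, A₂₂, -, h₂₂, rfl⟩ := hA.exists_eq_fromBlocks
  obtain ⟨p, q, U, d, hUU, hUU', hd, hUAU⟩ := h₂₂.exists_orthogonal_fromBlocks
  have h₁ := pencilCongr_fromBlocks_conj (P := (1 : Matrix (Fin r) (Fin r) ℝ)) (by simp)
    (by simp) hUU' hUU A₁₁ A₁₂ A₂₂
  rw [hUAU, transpose_one, Matrix.one_mul, Matrix.mul_one, Matrix.one_mul,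
    ← fromCols_toCols (A₁₂ * U)] at h₁
  let _ : Invertible (diagonal d) :=
    invertibleOfIsUnitDet _ (by simp [det_diagonal, Finset.prod_ne_zero_iff, hd])
  have h₂ := h₁.trans (pencilCongr_split_invertible _ _ _ (isSymm_diagonal d))
  refine ⟨p, q, _, _, d, ?_, hd, h₂⟩
  simpa [isSymm_fromBlocks_iff] using h₂.isSymm hA

theorem exists_orthogonal_mul_mul_eq_fromBlocks_one {r q : ℕ} (E : Matrix (Fin r) (Fin q) ℝ) :
    ∃ (k l m : ℕ) (P : Matrix (Fin r) (Fin k ⊕ Fin l) ℝ) (Q : Matrix (Fin q) (Fin k ⊕ Fin m) ℝ)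
      (Q' : Matrix (Fin k ⊕ Fin m) (Fin q) ℝ),
      Pᵀ * P = 1 ∧ P * Pᵀ = 1 ∧ Q * Q' = 1 ∧ Q' * Q = 1 ∧ Pᵀ * E * Q = fromBlocks 1 0 0 0 := by
  -- `P` and `V` diagonalise `E Eᵀ` and `Eᵀ E`, so `Pᵀ E V` has a single nonzero block `Z`, with
  -- `Z Zᵀ` and `Zᵀ Z` both invertible; then `Z` is invertible and `Z⁻¹` normalises it.
  obtain ⟨k, l, P, μ, hPP, hPP', hμ, hP⟩ :=
    (show (E * Eᵀ).IsSymm by simp [IsSymm, transpose_mul]).exists_orthogonal_fromBlocks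
  obtain ⟨k', m, V, ν, hVV, hVV', hν, hV⟩ :=
    (show (Eᵀ * E).IsSymm by simp [IsSymm, transpose_mul]).exists_orthogonal_fromBlocks
  set M := Pᵀ * E * V
  have hMM : M * Mᵀ = fromBlocks (diagonal μ) 0 0 0 := by
    calc M * Mᵀ = Pᵀ * E * (V * Vᵀ) * Eᵀ * P := by
          simp only [M, transpose_mul, transpose_transpose, Matrix.mul_assoc]
      _ = _ := by simp only [hVV', Matrix.mul_one, ← hP, Matrix.mul_assoc]
  have hMtM : Mᵀ * M = fromBlocks (diagonal ν) 0 0 0 := by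
    calc Mᵀ * M = Vᵀ * Eᵀ * (P * Pᵀ) * E * V := by
          simp only [M, transpose_mul, transpose_transpose, Matrix.mul_assoc]
      _ = _ := by simp only [hPP', Matrix.mul_one, ← hV, Matrix.mul_assoc]
  have hM := eq_fromBlocks_of_mul_transpose_eq_fromBlocks hMM hMtM
  set Z := M.toBlocks₁₁
  have hZZ : Z * Zᵀ = diagonal μ := by
    rw [hM] at hMM
    simpa [fromBlocks_transpose, fromBlocks_multiply] using hMM
  have hZZ' : Zᵀ * Z = diagonal ν := by
    rw [hM] at hMtM
    simpa [fromBlocks_transpose, fromBlocks_multiply] using hMtM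
  set Y := diagonal (fun i ↦ (ν i)⁻¹) * Zᵀ
  have hYZ : Y * Z = 1 := by simp [Y, Matrix.mul_assoc, hZZ', hν]
  have hZY : Z * Y = 1 := by
    have hZY' : Z * (Zᵀ * diagonal fun i ↦ (μ i)⁻¹) = 1 := by
      simp [← Matrix.mul_assoc, hZZ, hμ]
    calc Z * Y = Z * (Y * (Z * (Zᵀ * diagonal fun i ↦ (μ i)⁻¹))) := by
          rw [hZY', Matrix.mul_one]
      _ = 1 := by rw [← Matrix.mul_assoc Y, hYZ, Matrix.one_mul, hZY']
  refine ⟨k, l, m, P, V * fromBlocks Y 0 0 (1 : Matrix (Fin m) (Fin m) ℝ),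
    fromBlocks Z 0 0 (1 : Matrix (Fin m) (Fin m) ℝ) * Vᵀ, hPP, hPP', ?_, ?_, ?_⟩
  · simp [Matrix.mul_assoc, ← Matrix.mul_assoc (fromBlocks Y 0 0 1), fromBlocks_multiply, hYZ,
      hVV']
  · simp [Matrix.mul_assoc, ← Matrix.mul_assoc Vᵀ, hVV, fromBlocks_multiply, hZY]
  · rw [← Matrix.mul_assoc, show Pᵀ * E * V = M from rfl, hM]
    simp [fromBlocks_multiply, hZY]

theorem exists_pencilCongr_hyperbolic {r q : ℕ} {G : Matrix (Fin r) (Fin r) ℝ} (hG : G.IsSymm)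
    (E : Matrix (Fin r) (Fin q) ℝ) :
    ∃ (k l m : ℕ) (Λ : Fin l → ℝ),
      let J : Matrix (Fin k ⊕ Fin l) (Fin k ⊕ Fin m) ℝ := fromBlocks 1 0 0 0
      PencilCongr (fromBlocks G E Eᵀ 0) (fromBlocks 1 0 0 0)
        (fromBlocks (fromBlocks 0 0 0 (diagonal Λ)) J Jᵀ 0) (fromBlocks 1 0 0 0) := by
  obtain ⟨k, l, m, P, Q, Q', hPP, hPP', hQQ, hQQ', hPEQ⟩ :=
    exists_orthogonal_mul_mul_eq_fromBlocks_one E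
  have h₁ := pencilCongr_fromBlocks_conj hPP hPP' hQQ hQQ' G E 0
  have hG' : (Pᵀ * G * P).IsSymm := by simp [IsSymm, transpose_mul, hG.eq, Matrix.mul_assoc]
  obtain ⟨G₁₁, G₁₂, G₂₂, h₁₁, h₂₂, hG'_eq⟩ := hG'.exists_eq_fromBlocks
  rw [hPEQ, Matrix.mul_zero, Matrix.zero_mul, hG'_eq] at h₁
  have h₂ := h₁.trans (pencilCongr_hyperbolic_elim h₁₁ G₁₂ G₂₂)
  obtain ⟨U, Λ, hUU, hUU', hUGU⟩ := h₂₂.exists_orthogonal_diagonal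
  have h₃ := pencilCongr_fromBlocks_conj
    (P := (fromBlocks 1 0 0 U : Matrix (Fin k ⊕ Fin l) (Fin k ⊕ Fin l) ℝ))
    (Q := (1 : Matrix (Fin k ⊕ Fin m) (Fin k ⊕ Fin m) ℝ)) (Q' := 1)
    (by simp [fromBlocks_transpose, fromBlocks_multiply, hUU])
    (by simp [fromBlocks_transpose, fromBlocks_multiply, hUU'])
    (Matrix.mul_one 1) (Matrix.mul_one 1) (fromBlocks 0 0 0 G₂₂) (fromBlocks 1 0 0 0) 0
  refine ⟨k, l, m, Λ, h₂.trans ?_⟩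
  simpa [fromBlocks_transpose, fromBlocks_multiply, hUGU] using h₃

def canonicalIndexEquiv (α β γ δ : Type*) :
    (α × Fin 2) ⊕ (β ⊕ (γ ⊕ δ)) ≃ ((α ⊕ β) ⊕ (α ⊕ δ)) ⊕ γ where
  toFun
    | .inl (i, a) => if a = 0 then .inl (.inl (.inl i)) else .inl (.inr (.inl i))
    | .inr (.inl j) => .inl (.inl (.inr j))
    | .inr (.inr (.inl j)) => .inr j
    | .inr (.inr (.inr j)) => .inl (.inr (.inr j))
  invFun
    | .inl (.inl (.inl i)) => .inl (i, 0)
    | .inl (.inl (.inr j)) => .inr (.inl j)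
    | .inl (.inr (.inl i)) => .inl (i, 1)
    | .inl (.inr (.inr j)) => .inr (.inr (.inr j))
    | .inr j => .inr (.inr (.inl j))
  left_inv x := by
    rcases x with ⟨i, a⟩ | j | j | j
    · fin_cases a <;> rfl
    all_goals rfl
  right_inv y := by
    rcases y with ((i | j) | (i | j)) | j <;> rfl

theorem submatrix_canonicalIndexEquiv {k l p m : ℕ} (Λ : Fin l → ℝ) (d : Fin p → ℝ) :
    let J : Matrix (Fin k ⊕ Fin l) (Fin k ⊕ Fin m) ℝ := fromBlocks 1 0 0 0
    let e := canonicalIndexEquiv (Fin k) (Fin l) (Fin p) (Fin m)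
    (fromBlocks (fromBlocks (fromBlocks 0 0 0 (diagonal Λ)) J Jᵀ 0) 0 0 (diagonal d)).submatrix e e
        = fromBlocks ((1 : Matrix (Fin k) (Fin k) ℝ) ⊗ₖ !![0, 1; 1, 0]) 0 0
            (fromBlocks (diagonal Λ) 0 0 (fromBlocks (diagonal d) 0 0 0)) ∧
      (fromBlocks (fromBlocks 1 0 0 (0 : Matrix (Fin k ⊕ Fin m) (Fin k ⊕ Fin m) ℝ)) 0 0
          (0 : Matrix (Fin p) (Fin p) ℝ)).submatrix e e
        = fromBlocks ((1 : Matrix (Fin k) (Fin k) ℝ) ⊗ₖ !![1, 0; 0, 0]) 0 0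
            (fromBlocks 1 0 0 0) := by
  constructor <;>
  · ext (⟨i, a⟩ | i | i | i) (⟨j, b⟩ | j | j | j) <;> (try fin_cases a) <;> (try fin_cases b) <;>
      simp [canonicalIndexEquiv, one_apply, diagonal_apply, eq_comm]

/-- canonical form of a symmetric semi-definite pencil: for A symmetric
and B positive semi-definite there are block sizes n₀,n₁,n₂,n₃ with 2n₀+n₁+n₂+n₃ = n
(encoded by the equivalence e) and an invertible W with
WᵀAW = diag(I_{n₀}⊗[[0,1],[1,0]], Λ₁, Λ₂, 0) and
WᵀBW = diag(I_{n₀}⊗[[1,0],[0,0]], I_{n₁}, 0, 0), Λ₁, Λ₂ real diagonal, Λ₂ invertible. -/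
theorem stmt9 {n : ℕ} (A B : Matrix (Fin n) (Fin n) ℝ)
    (hA : A.IsHermitian) (hB : B.PosSemidef) :
    ∃ (n0 n1 n2 n3 : ℕ)
      (e : ((Fin n0 × Fin 2) ⊕ (Fin n1 ⊕ (Fin n2 ⊕ Fin n3))) ≃ Fin n)
      (W : Matrix (Fin n) (Fin n) ℝ) (Λ1 : Fin n1 → ℝ) (Λ2 : Fin n2 → ℝ),
      IsUnit W ∧ (∀ i, Λ2 i ≠ 0) ∧
      (Wᵀ * A * W).submatrix e e
        = Matrix.fromBlocks ((1 : Matrix (Fin n0) (Fin n0) ℝ) ⊗ₖ !![(0:ℝ),1;1,0]) 0 0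
            (Matrix.fromBlocks (Matrix.diagonal Λ1) 0 0
              (Matrix.fromBlocks (Matrix.diagonal Λ2) 0 0 0)) ∧
      (Wᵀ * B * W).submatrix e e
        = Matrix.fromBlocks ((1 : Matrix (Fin n0) (Fin n0) ℝ) ⊗ₖ !![(1:ℝ),0;0,0]) 0 0
            (Matrix.fromBlocks (1 : Matrix (Fin n1) (Fin n1) ℝ) 0 0 0) := by
  obtain ⟨r, s, A₁, h₁⟩ := hB.exists_pencilCongr A
  obtain ⟨p, q, G, E, d, hG, hd, h₂⟩ :=
    exists_pencilCongr_split_regular (h₁.isSymm (isHermitian_iff_isSymm.mp hA))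
  obtain ⟨k, l, m, Λ, h₃⟩ := exists_pencilCongr_hyperbolic hG E
  have h₄ := (h₃.fromBlocks (.refl (diagonal d) 0)).trans (.submatrix (canonicalIndexEquiv ..))
  obtain ⟨e, W, hW, hWA, hWB⟩ := (h₁.trans (h₂.trans h₄)).exists_isUnit
  obtain ⟨hA', hB'⟩ := submatrix_canonicalIndexEquiv (k := k) (m := m) Λ d
  exact ⟨k, l, p, m, e, W, Λ, d, hW, hd, hWA.trans hA', hWB.trans hB'⟩
end

section
/- In the canonical form of a symmetric semi-definite pencil A - λB (B positive semi-definite) with blocks of sizes 2n_0, n_1, n_2, n_3 as in the Fix–Heiberger canonical form, the block sizes satisfy: n_3 = dim(N(A) ∩ N(B)), n_0 = dim N(B) - n_2 - n_3, n_1 = rank(B) - n_0, and n_2 = rank(P A P) where P is the orthogonal projection onto N(B). -/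
open Matrix Kronecker

namespace Stmt10Aux

variable {n0 n1 n2 n3 : ℕ}

abbrev Idx (n0 n1 n2 n3 : ℕ) := (Fin n0 × Fin 2) ⊕ (Fin n1 ⊕ (Fin n2 ⊕ Fin n3))

def canA (n0 : ℕ) (Λ1 : Fin n1 → ℝ) (Λ2 : Fin n2 → ℝ) (n3 : ℕ) :
    Matrix (Idx n0 n1 n2 n3) (Idx n0 n1 n2 n3) ℝ :=
  Matrix.fromBlocks ((1 : Matrix (Fin n0) (Fin n0) ℝ) ⊗ₖ !![(0:ℝ),1;1,0]) 0 0
    (Matrix.fromBlocks (Matrix.diagonal Λ1) 0 0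
      (Matrix.fromBlocks (Matrix.diagonal Λ2) 0 0 0))

def canB (n0 n1 n2 n3 : ℕ) : Matrix (Idx n0 n1 n2 n3) (Idx n0 n1 n2 n3) ℝ :=
  Matrix.fromBlocks ((1 : Matrix (Fin n0) (Fin n0) ℝ) ⊗ₖ !![(1:ℝ),0;0,0]) 0 0
    (Matrix.fromBlocks (1 : Matrix (Fin n1) (Fin n1) ℝ) 0 0 0)

variable (Λ1 : Fin n1 → ℝ) (Λ2 : Fin n2 → ℝ) (x : Idx n0 n1 n2 n3 → ℝ)

lemma canA_mulVec_inl0 (i : Fin n0) :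
    (canA n0 Λ1 Λ2 n3 *ᵥ x) (Sum.inl (i,0)) = x (Sum.inl (i,1)) := by
  simp [canA, Matrix.mulVec, dotProduct, Fintype.sum_sum_type, Fintype.sum_prod_type,
    Matrix.fromBlocks, Matrix.one_apply, Fin.sum_univ_two]

lemma canA_mulVec_inl1 (i : Fin n0) :
    (canA n0 Λ1 Λ2 n3 *ᵥ x) (Sum.inl (i,1)) = x (Sum.inl (i,0)) := by
  simp [canA, Matrix.mulVec, dotProduct, Fintype.sum_sum_type, Fintype.sum_prod_type,
    Matrix.fromBlocks, Matrix.one_apply, Fin.sum_univ_two]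

lemma canA_mulVec_n1 (j : Fin n1) :
    (canA n0 Λ1 Λ2 n3 *ᵥ x) (Sum.inr (Sum.inl j)) = Λ1 j * x (Sum.inr (Sum.inl j)) := by
  simp [canA, Matrix.mulVec, dotProduct, Fintype.sum_sum_type, Fintype.sum_prod_type,
    Matrix.fromBlocks, Matrix.diagonal, Fin.sum_univ_two]

lemma canA_mulVec_n2 (k : Fin n2) :
    (canA n0 Λ1 Λ2 n3 *ᵥ x) (Sum.inr (Sum.inr (Sum.inl k))) = Λ2 k * x (Sum.inr (Sum.inr (Sum.inl k))) := by
  simp [canA, Matrix.mulVec, dotProduct, Fintype.sum_sum_type, Fintype.sum_prod_type,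
    Matrix.fromBlocks, Matrix.diagonal, Fin.sum_univ_two]

lemma canA_mulVec_n3 (k : Fin n3) :
    (canA n0 Λ1 Λ2 n3 *ᵥ x) (Sum.inr (Sum.inr (Sum.inr k))) = 0 := by
  simp [canA, Matrix.mulVec, dotProduct, Fintype.sum_sum_type, Fintype.sum_prod_type,
    Matrix.fromBlocks, Fin.sum_univ_two]

lemma canB_mulVec_inl0 (i : Fin n0) :
    (canB n0 n1 n2 n3 *ᵥ x) (Sum.inl (i,0)) = x (Sum.inl (i,0)) := by
  simp [canB, Matrix.mulVec, dotProduct, Fintype.sum_sum_type, Fintype.sum_prod_type,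
    Matrix.fromBlocks, Matrix.one_apply, Fin.sum_univ_two]

lemma canB_mulVec_inl1 (i : Fin n0) :
    (canB n0 n1 n2 n3 *ᵥ x) (Sum.inl (i,1)) = 0 := by
  simp [canB, Matrix.mulVec, dotProduct, Fintype.sum_sum_type, Fintype.sum_prod_type,
    Matrix.fromBlocks, Matrix.one_apply, Fin.sum_univ_two]

lemma canB_mulVec_n1 (j : Fin n1) :
    (canB n0 n1 n2 n3 *ᵥ x) (Sum.inr (Sum.inl j)) = x (Sum.inr (Sum.inl j)) := by
  simp [canB, Matrix.mulVec, dotProduct, Fintype.sum_sum_type, Fintype.sum_prod_type,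
    Matrix.fromBlocks, Matrix.one_apply, Fin.sum_univ_two]

lemma canB_mulVec_n23 (k : Fin n2 ⊕ Fin n3) :
    (canB n0 n1 n2 n3 *ᵥ x) (Sum.inr (Sum.inr k)) = 0 := by
  cases k <;>
  simp [canB, Matrix.mulVec, dotProduct, Fintype.sum_sum_type, Fintype.sum_prod_type,
    Matrix.fromBlocks, Fin.sum_univ_two]

end Stmt10Aux

namespace Stmt10Aux
open Sum
variable {n0 n1 n2 n3 : ℕ} (Λ1 : Fin n1 → ℝ) (Λ2 : Fin n2 → ℝ) (x : Idx n0 n1 n2 n3 → ℝ)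

lemma ker_canB_iff :
    canB n0 n1 n2 n3 *ᵥ x = 0 ↔
      (∀ i, x (inl (i,0)) = 0) ∧ ∀ j, x (inr (inl j)) = 0 := by
  constructor
  · intro h
    refine ⟨fun i => ?_, fun j => ?_⟩
    · rw [← canB_mulVec_inl0 x i, h]; rfl
    · rw [← canB_mulVec_n1 x j, h]; rfl
  · rintro ⟨h1, h2⟩
    funext idx
    obtain ⟨i, a⟩ | j | k := idx
    · fin_cases a <;>
        simp [canB_mulVec_inl0, canB_mulVec_inl1, h1 i]
    · rw [canB_mulVec_n1]; exact h2 j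
    · rw [canB_mulVec_n23]; rfl

lemma ker_canAB_iff (hΛ2 : ∀ k, Λ2 k ≠ 0) :
    (canA n0 Λ1 Λ2 n3 *ᵥ x = 0 ∧ canB n0 n1 n2 n3 *ᵥ x = 0) ↔
      ((∀ i a, x (inl (i,a)) = 0) ∧ (∀ j, x (inr (inl j)) = 0) ∧
        ∀ k, x (inr (inr (inl k))) = 0) := by
  constructor
  · rintro ⟨hA, hB⟩
    obtain ⟨h1, h2⟩ := (ker_canB_iff x).mp hB
    refine ⟨fun i a => ?_, h2, fun k => ?_⟩
    · fin_cases a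
      · exact h1 i
      · have := congrFun hA (inl (i, 0))
        rw [canA_mulVec_inl0] at this
        simpa using this
    · have := congrFun hA (inr (inr (inl k)))
      rw [canA_mulVec_n2] at this
      simpa [hΛ2 k] using this
  · rintro ⟨h1, h2, h3⟩
    refine ⟨?_, (ker_canB_iff x).mpr ⟨fun i => h1 i 0, h2⟩⟩
    funext idx
    obtain ⟨i, a⟩ | j | k | l := idx
    · fin_cases a <;>
        simp [canA_mulVec_inl0, canA_mulVec_inl1, h1 i]
    · rw [canA_mulVec_n1, h2]; simp
    · rw [canA_mulVec_n2, h3]; simp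
    · rw [canA_mulVec_n3]; rfl

lemma rad_iff (hΛ2 : ∀ k, Λ2 k ≠ 0) :
    (canB n0 n1 n2 n3 *ᵥ x = 0 ∧
      ∀ y, canB n0 n1 n2 n3 *ᵥ y = 0 → y ⬝ᵥ (canA n0 Λ1 Λ2 n3 *ᵥ x) = 0) ↔
      ((∀ i, x (inl (i,0)) = 0) ∧ (∀ j, x (inr (inl j)) = 0) ∧
        ∀ k, x (inr (inr (inl k))) = 0) := by
  constructor
  · rintro ⟨hB, hrad⟩
    obtain ⟨h1, h2⟩ := (ker_canB_iff x).mp hB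
    refine ⟨h1, h2, fun k => ?_⟩
    have hy : canB n0 n1 n2 n3 *ᵥ (Pi.single (inr (inr (inl k))) (1:ℝ)) = 0 := by
      refine (ker_canB_iff _).mpr ⟨fun i => ?_, fun j => ?_⟩ <;> simp [Pi.single_apply]
    have := hrad _ hy
    rw [single_dotProduct] at this
    rw [canA_mulVec_n2] at this
    have := (mul_eq_zero.mp this).resolve_left one_ne_zero
    exact (mul_eq_zero.mp this).resolve_left (hΛ2 k)
  · rintro ⟨h1, h2, h3⟩
    refine ⟨(ker_canB_iff x).mpr ⟨h1, h2⟩, fun y hy => ?_⟩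
    obtain ⟨g1, g2⟩ := (ker_canB_iff y).mp hy
    apply Finset.sum_eq_zero
    rintro (⟨i,a⟩|j|k|l) -
    · fin_cases a <;>
        simp [canA_mulVec_inl1, g1 i, h1 i]
    · rw [canA_mulVec_n1, h2 j, mul_zero, mul_zero]
    · rw [canA_mulVec_n2, h3 k, mul_zero, mul_zero]
    · rw [canA_mulVec_n3, mul_zero]

end Stmt10Aux

namespace Stmt10Aux
open Sum LinearMap

-- generic finrank of kernel of a coordinate-restriction map
lemma card_add_finrank_ker_funLeft {ι α : Type*} [Fintype ι] [DecidableEq ι] [Fintype α]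
    (g : α → ι) (hg : Function.Injective g) :
    Fintype.card α + Module.finrank ℝ (LinearMap.ker (LinearMap.funLeft ℝ ℝ g)) = Fintype.card ι := by
  have hsurj : Function.Surjective (LinearMap.funLeft ℝ ℝ g) :=
    LinearMap.funLeft_surjective_of_injective ℝ ℝ g hg
  have h := LinearMap.finrank_range_add_finrank_ker (LinearMap.funLeft ℝ ℝ g)
  rw [LinearMap.range_eq_top.mpr hsurj] at h
  simpa [Module.finrank_fintype_fun_eq_card] using h

lemma finrank_comap_eq {M N : Type*} [AddCommGroup M] [Module ℝ M] [FiniteDimensional ℝ M]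
    [AddCommGroup N] [Module ℝ N] (f : M →ₗ[ℝ] N) (S : Submodule ℝ N)
    (hS : S ≤ LinearMap.range f) :
    Module.finrank ℝ (S.comap f) = Module.finrank ℝ S + Module.finrank ℝ (LinearMap.ker f) := by
  set g := f.domRestrict (S.comap f) with hg
  have hrange : LinearMap.range g = S := by
    rw [hg, LinearMap.range_domRestrict, Submodule.map_comap_eq, inf_eq_right.mpr hS]
  have hle : LinearMap.ker f ≤ S.comap f := by
    intro x hx
    simp only [Submodule.mem_comap]
    rw [LinearMap.mem_ker.mp hx]
    exact S.zero_mem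
  have hker : Module.finrank ℝ (LinearMap.ker g) = Module.finrank ℝ (LinearMap.ker f) := by
    rw [hg, LinearMap.ker_domRestrict]
    exact (Submodule.comapSubtypeEquivOfLe hle).finrank_eq
  have h := LinearMap.finrank_range_add_finrank_ker g
  rw [hrange, hker] at h
  exact h.symm

set_option linter.unusedSectionVars false

variable {n : ℕ} {ι : Type*} [Fintype ι] [DecidableEq ι]

noncomputable def phiEquiv (e : ι ≃ Fin n) (W : Matrix (Fin n) (Fin n) ℝ) (h : Invertible W) :
    (ι → ℝ) ≃ₗ[ℝ] (Fin n → ℝ) :=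
  (LinearEquiv.funCongrLeft ℝ ℝ e.symm).trans (Matrix.toLinearEquiv' W h)

lemma phiEquiv_apply (e : ι ≃ Fin n) (W : Matrix (Fin n) (Fin n) ℝ) (h : Invertible W)
    (x : ι → ℝ) : phiEquiv e W h x = W *ᵥ (x ∘ e.symm) := by
  simp [phiEquiv, Matrix.toLinearEquiv', LinearEquiv.funCongrLeft, Matrix.toLin'_apply]
  rfl

lemma transfer (e : ι ≃ Fin n) (W M : Matrix (Fin n) (Fin n) ℝ) (h : Invertible W) (x : ι → ℝ) :
    ((Wᵀ * M * W).submatrix e e) *ᵥ x = (Wᵀ *ᵥ (M *ᵥ (phiEquiv e W h x))) ∘ e := by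
  rw [phiEquiv_apply, Matrix.submatrix_mulVec_equiv, Matrix.mulVec_mulVec,
    Matrix.mulVec_mulVec, mul_assoc]

lemma transfer_zero (e : ι ≃ Fin n) (W M : Matrix (Fin n) (Fin n) ℝ) (hW : IsUnit W)
    (h : Invertible W) (x : ι → ℝ) :
    ((Wᵀ * M * W).submatrix e e) *ᵥ x = 0 ↔ M *ᵥ (phiEquiv e W h x) = 0 := by
  have hdetT : IsUnit Wᵀ.det := by
    rw [Matrix.det_transpose]; exact (Matrix.isUnit_iff_isUnit_det W).mp hW
  rw [transfer e W M h x]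
  constructor
  · intro hz
    have h0 : Wᵀ *ᵥ (M *ᵥ (phiEquiv e W h x)) = 0 := by
      funext i
      have := congrFun hz (e.symm i)
      simpa using this
    have := congrArg (fun z => (Wᵀ)⁻¹ *ᵥ z) h0
    simpa [Matrix.mulVec_mulVec, Matrix.nonsing_inv_mul _ hdetT] using this
  · intro hz
    rw [hz]
    funext i
    simp

lemma dot_comp_equiv (e : ι ≃ Fin n) (y : ι → ℝ) (f : Fin n → ℝ) :
    y ⬝ᵥ (f ∘ e) = (y ∘ e.symm) ⬝ᵥ f := by
  rw [dotProduct, dotProduct]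
  exact Fintype.sum_equiv e _ _ (fun i => by simp)

lemma transfer_dot (e : ι ≃ Fin n) (W M : Matrix (Fin n) (Fin n) ℝ) (h : Invertible W)
    (x y : ι → ℝ) :
    y ⬝ᵥ (((Wᵀ * M * W).submatrix e e) *ᵥ x)
      = (phiEquiv e W h y) ⬝ᵥ (M *ᵥ (phiEquiv e W h x)) := by
  rw [transfer e W M h x, dot_comp_equiv, Matrix.dotProduct_mulVec, Matrix.vecMul_transpose,
    phiEquiv_apply, phiEquiv_apply]

lemma proj_mulVec_eq_zero_iff (P : Matrix (Fin n) (Fin n) ℝ) (hP2 : P * P = P) (hPT : Pᵀ = P)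
    (z : Fin n → ℝ) :
    P *ᵥ z = 0 ↔ ∀ u, (P *ᵥ u) ⬝ᵥ z = 0 := by
  constructor
  · intro hz u
    rw [dotProduct_comm, Matrix.dotProduct_mulVec, ← Matrix.mulVec_transpose, hPT, hz]
    simp
  · intro hu
    have hself : (P *ᵥ z) ⬝ᵥ (P *ᵥ z) = 0 := by
      rw [Matrix.dotProduct_mulVec, ← Matrix.mulVec_transpose, hPT, Matrix.mulVec_mulVec, hP2]
      exact hu z
    exact dotProduct_self_eq_zero.mp hself

end Stmt10Aux

namespace Stmt10Aux
open Sum LinearMap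

variable {n0 n1 n2 n3 : ℕ}

def gB (n0 n1 n2 n3 : ℕ) : Fin n0 ⊕ Fin n1 → Idx n0 n1 n2 n3 :=
  Sum.elim (fun i => inl (i,0)) (fun j => inr (inl j))

def g3 (n0 n1 n2 n3 : ℕ) : (Fin n0 × Fin 2) ⊕ (Fin n1 ⊕ Fin n2) → Idx n0 n1 n2 n3 :=
  Sum.elim inl (Sum.elim (fun j => inr (inl j)) (fun k => inr (inr (inl k))))

def gR (n0 n1 n2 n3 : ℕ) : Fin n0 ⊕ (Fin n1 ⊕ Fin n2) → Idx n0 n1 n2 n3 :=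
  Sum.elim (fun i => inl (i,0)) (Sum.elim (fun j => inr (inl j)) (fun k => inr (inr (inl k))))

lemma gB_inj : Function.Injective (gB n0 n1 n2 n3) := by
  rintro (i|j) (i'|j') h <;> simp_all [gB]

lemma g3_inj : Function.Injective (g3 n0 n1 n2 n3) := by
  rintro (p|(j|k)) (p'|(j'|k')) h <;> simp_all [g3]

lemma gR_inj : Function.Injective (gR n0 n1 n2 n3) := by
  rintro (i|(j|k)) (i'|(j'|k')) h <;> simp_all [gR]

lemma mem_ker_funLeft_gB (x : Idx n0 n1 n2 n3 → ℝ) :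
    x ∈ LinearMap.ker (LinearMap.funLeft ℝ ℝ (gB n0 n1 n2 n3)) ↔
      ((∀ i, x (inl (i,0)) = 0) ∧ ∀ j, x (inr (inl j)) = 0) := by
  simp [LinearMap.mem_ker, LinearMap.funLeft, funext_iff, Sum.forall, gB]

lemma mem_ker_funLeft_g3 (x : Idx n0 n1 n2 n3 → ℝ) :
    x ∈ LinearMap.ker (LinearMap.funLeft ℝ ℝ (g3 n0 n1 n2 n3)) ↔
      ((∀ i a, x (inl (i,a)) = 0) ∧ (∀ j, x (inr (inl j)) = 0) ∧
        ∀ k, x (inr (inr (inl k))) = 0) := by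
  simp [LinearMap.mem_ker, LinearMap.funLeft, funext_iff, Sum.forall, Prod.forall, g3]

lemma mem_ker_funLeft_gR (x : Idx n0 n1 n2 n3 → ℝ) :
    x ∈ LinearMap.ker (LinearMap.funLeft ℝ ℝ (gR n0 n1 n2 n3)) ↔
      ((∀ i, x (inl (i,0)) = 0) ∧ (∀ j, x (inr (inl j)) = 0) ∧
        ∀ k, x (inr (inr (inl k))) = 0) := by
  simp [LinearMap.mem_ker, LinearMap.funLeft, funext_iff, Sum.forall, gR]

end Stmt10Aux


open Stmt10Aux

/-- In the Fix–Heiberger canonical form of a symmetric semi-definite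
pencil A - λB, the block sizes satisfy n₃ = dim(N(A)∩N(B)),
n₀ = dim N(B) - n₂ - n₃, n₁ = rank B - n₀, and n₂ = rank(P A P) where P is the
orthogonal projection onto N(B). -/
theorem stmt10 {n : ℕ} (A B : Matrix (Fin n) (Fin n) ℝ)
    (hA : A.IsHermitian) (hB : B.PosSemidef)
    (n0 n1 n2 n3 : ℕ)
    (e : ((Fin n0 × Fin 2) ⊕ (Fin n1 ⊕ (Fin n2 ⊕ Fin n3))) ≃ Fin n)
    (W : Matrix (Fin n) (Fin n) ℝ) (Λ1 : Fin n1 → ℝ) (Λ2 : Fin n2 → ℝ)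
    (hW : IsUnit W) (hΛ2 : ∀ i, Λ2 i ≠ 0)
    (hcanA : (Wᵀ * A * W).submatrix e e
      = Matrix.fromBlocks ((1 : Matrix (Fin n0) (Fin n0) ℝ) ⊗ₖ !![(0:ℝ),1;1,0]) 0 0
          (Matrix.fromBlocks (Matrix.diagonal Λ1) 0 0
            (Matrix.fromBlocks (Matrix.diagonal Λ2) 0 0 0)))
    (hcanB : (Wᵀ * B * W).submatrix e e
      = Matrix.fromBlocks ((1 : Matrix (Fin n0) (Fin n0) ℝ) ⊗ₖ !![(1:ℝ),0;0,0]) 0 0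
          (Matrix.fromBlocks (1 : Matrix (Fin n1) (Fin n1) ℝ) 0 0 0)) :
    n3 = Module.finrank ℝ ↥(LinearMap.ker A.mulVecLin ⊓ LinearMap.ker B.mulVecLin) ∧
    n0 + n2 + n3 = Module.finrank ℝ (LinearMap.ker B.mulVecLin) ∧
    n0 + n1 = B.rank ∧
    (∀ P : Matrix (Fin n) (Fin n) ℝ, P * P = P → Pᵀ = P →
      LinearMap.range P.mulVecLin = LinearMap.ker B.mulVecLin →
      n2 = (P * A * P).rank) := by
  classical
  have hdet : IsUnit W.det := (Matrix.isUnit_iff_isUnit_det W).mp hW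
  have hinv : Invertible W := W.invertibleOfIsUnitDet hdet
  set Φ : ((Idx n0 n1 n2 n3 → ℝ) ≃ₗ[ℝ] (Fin n → ℝ)) := phiEquiv e W hinv with hΦdef
  have hcanA' : (Wᵀ * A * W).submatrix e e = canA n0 Λ1 Λ2 n3 := hcanA
  have hcanB' : (Wᵀ * B * W).submatrix e e = canB n0 n1 n2 n3 := hcanB
  have hTA : ∀ x, canA n0 Λ1 Λ2 n3 *ᵥ x = 0 ↔ A *ᵥ (Φ x) = 0 := by
    intro x; rw [← hcanA']; exact transfer_zero e W A hW hinv x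
  have hTB : ∀ x, canB n0 n1 n2 n3 *ᵥ x = 0 ↔ B *ᵥ (Φ x) = 0 := by
    intro x; rw [← hcanB']; exact transfer_zero e W B hW hinv x
  have hTdot : ∀ x y, y ⬝ᵥ (canA n0 Λ1 Λ2 n3 *ᵥ x) = (Φ y) ⬝ᵥ (A *ᵥ (Φ x)) := by
    intro x y; rw [← hcanA']; exact transfer_dot e W A hinv x y
  have hcard : n0 * 2 + (n1 + (n2 + n3)) = n := by
    simpa using Fintype.card_congr e
  have hcardι : Fintype.card (Idx n0 n1 n2 n3) = n := by
    simpa using Fintype.card_congr e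
  -- kernel of B
  have hKB : LinearMap.ker B.mulVecLin
      = Submodule.map (Φ : (Idx n0 n1 n2 n3 → ℝ) →ₗ[ℝ] (Fin n → ℝ))
          (LinearMap.ker (LinearMap.funLeft ℝ ℝ (gB n0 n1 n2 n3))) := by
    ext v
    rw [Submodule.mem_map_equiv, mem_ker_funLeft_gB, ← ker_canB_iff, hTB,
      Φ.apply_symm_apply]
    simp [Matrix.mulVecLin_apply]
  have hdimKB : (n0 + n1) + Module.finrank ℝ (LinearMap.ker B.mulVecLin) = n := by
    rw [hKB, LinearEquiv.finrank_map_eq]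
    have h := card_add_finrank_ker_funLeft (gB n0 n1 n2 n3) gB_inj
    rw [hcardι] at h
    simpa using h
  -- kernel of A ⊓ kernel of B
  have hKAB : LinearMap.ker A.mulVecLin ⊓ LinearMap.ker B.mulVecLin
      = Submodule.map (Φ : (Idx n0 n1 n2 n3 → ℝ) →ₗ[ℝ] (Fin n → ℝ))
          (LinearMap.ker (LinearMap.funLeft ℝ ℝ (g3 n0 n1 n2 n3))) := by
    ext v
    rw [Submodule.mem_map_equiv, mem_ker_funLeft_g3,
      ← ker_canAB_iff Λ1 Λ2 (Φ.symm v) hΛ2, hTA, hTB, Φ.apply_symm_apply]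
    simp [Matrix.mulVecLin_apply]
  have hdimKAB : (n0 * 2 + (n1 + n2))
      + Module.finrank ℝ ↥(LinearMap.ker A.mulVecLin ⊓ LinearMap.ker B.mulVecLin) = n := by
    rw [hKAB, LinearEquiv.finrank_map_eq]
    have h := card_add_finrank_ker_funLeft (g3 n0 n1 n2 n3) g3_inj
    rw [hcardι] at h
    simpa using h
  refine ⟨by omega, by omega, ?_, ?_⟩
  · -- rank B
    have hrn := LinearMap.finrank_range_add_finrank_ker B.mulVecLin
    rw [Module.finrank_fintype_fun_eq_card, Fintype.card_fin] at hrn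
    have hdef : B.rank = Module.finrank ℝ (LinearMap.range B.mulVecLin) := rfl
    omega
  · -- rank PAP
    intro P hP2 hPT hPrange
    set Rad : Submodule ℝ (Fin n → ℝ) :=
      Submodule.map (Φ : (Idx n0 n1 n2 n3 → ℝ) →ₗ[ℝ] (Fin n → ℝ))
        (LinearMap.ker (LinearMap.funLeft ℝ ℝ (gR n0 n1 n2 n3))) with hRadDef
    have hRadmem : ∀ v, v ∈ Rad ↔
        (B *ᵥ v = 0 ∧ ∀ w, B *ᵥ w = 0 → w ⬝ᵥ (A *ᵥ v) = 0) := by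
      intro v
      rw [hRadDef, Submodule.mem_map_equiv, mem_ker_funLeft_gR,
        ← rad_iff Λ1 Λ2 (Φ.symm v) hΛ2]
      constructor
      · rintro ⟨h1, h2⟩
        refine ⟨by rwa [hTB, Φ.apply_symm_apply] at h1, fun w hw => ?_⟩
        have h3 := h2 (Φ.symm w) (by rwa [hTB, Φ.apply_symm_apply])
        rwa [hTdot, Φ.apply_symm_apply, Φ.apply_symm_apply] at h3
      · rintro ⟨h1, h2⟩
        refine ⟨by rwa [hTB, Φ.apply_symm_apply], fun y hy => ?_⟩
        rw [hTdot, Φ.apply_symm_apply]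
        exact h2 (Φ y) ((hTB y).mp hy)
    have hdimRad : (n0 + (n1 + n2)) + Module.finrank ℝ Rad = n := by
      rw [hRadDef, LinearEquiv.finrank_map_eq]
      have h := card_add_finrank_ker_funLeft (gR n0 n1 n2 n3) gR_inj
      rw [hcardι] at h
      simpa using h
    have hkerPAP : LinearMap.ker (P * A * P).mulVecLin = Submodule.comap P.mulVecLin Rad := by
      ext x
      simp only [LinearMap.mem_ker, Matrix.mulVecLin_apply, Submodule.mem_comap]
      rw [hRadmem]
      have hmv : (P * A * P) *ᵥ x = P *ᵥ (A *ᵥ (P *ᵥ x)) := by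
        rw [Matrix.mulVec_mulVec, Matrix.mulVec_mulVec]
      constructor
      · intro h
        have hPx : B *ᵥ (P *ᵥ x) = 0 := by
          have hx : P *ᵥ x ∈ LinearMap.range P.mulVecLin := ⟨x, rfl⟩
          rw [hPrange] at hx
          simpa [Matrix.mulVecLin_apply] using LinearMap.mem_ker.mp hx
        refine ⟨hPx, fun w hw => ?_⟩
        have hw' : w ∈ LinearMap.range P.mulVecLin := by
          rw [hPrange]
          exact LinearMap.mem_ker.mpr (by simpa [Matrix.mulVecLin_apply] using hw)
        obtain ⟨u, rfl⟩ := hw'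
        have h0 : P *ᵥ (A *ᵥ (P *ᵥ x)) = 0 := by rw [← hmv]; exact h
        simpa [Matrix.mulVecLin_apply] using
          (proj_mulVec_eq_zero_iff P hP2 hPT _).mp h0 u
      · rintro ⟨hPx, hrad⟩
        rw [hmv]
        refine (proj_mulVec_eq_zero_iff P hP2 hPT _).mpr fun u => ?_
        apply hrad
        have hx : P *ᵥ u ∈ LinearMap.range P.mulVecLin := ⟨u, rfl⟩
        rw [hPrange] at hx
        simpa [Matrix.mulVecLin_apply] using LinearMap.mem_ker.mp hx
    have hRadle : Rad ≤ LinearMap.range P.mulVecLin := by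
      intro v hv
      rw [hPrange]
      exact LinearMap.mem_ker.mpr
        (by simpa [Matrix.mulVecLin_apply] using ((hRadmem v).mp hv).1)
    have hcomap := finrank_comap_eq P.mulVecLin Rad hRadle
    have h1 := LinearMap.finrank_range_add_finrank_ker P.mulVecLin
    rw [hPrange, Module.finrank_fintype_fun_eq_card, Fintype.card_fin] at h1
    have h2 := LinearMap.finrank_range_add_finrank_ker (P * A * P).mulVecLin
    rw [hkerPAP, hcomap, Module.finrank_fintype_fun_eq_card, Fintype.card_fin] at h2
    have h3 : (P * A * P).rank = Module.finrank ℝ (LinearMap.range (P * A * P).mulVecLin) := rfl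
    omega
end

section
/- A symmetric semi-definite pencil A - λB (with B positive semi-definite) is simultaneously diagonalizable by a congruence (i.e., there is an invertible W with both W^T A W and W^T B W diagonal) if and only if the block size n_0 in its canonical form is zero. -/
/-!
A diagonal pair `(D_A, D_B)` satisfies: if `D_B x = 0` and `D_A x ∈ range D_B`, then
`D_A x = 0` (coordinatewise, `D_A x` vanishes wherever `D_B` does not, and `x` vanishes
wherever it does). This property is invariant under congruence and reindexing, so every
simultaneously diagonalizable pencil has it. A block `[0 1; 1 0] - λ[1 0; 0 0]` of the
canonical form violates it with `x = e₂`, `z = e₁`: `B x = 0` and `A x = e₁ = B e₁ ≠ 0`.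
Conversely, if `n₀ = 0` the canonical form is already diagonal.
-/

open Matrix Kronecker

namespace Matrix

variable {m m' : Type*} [Fintype m] [Fintype m'] {R : Type*} [CommRing R]

def KerRangeCondition (A B : Matrix m m R) : Prop :=
  ∀ x z : m → R, B *ᵥ x = 0 → A *ᵥ x = B *ᵥ z → A *ᵥ x = 0

lemma kerRangeCondition_diagonal [DecidableEq m] [NoZeroDivisors R] (dA dB : m → R) :
    KerRangeCondition (diagonal dA) (diagonal dB) := by
  intro x z hx hxz
  funext i
  have hxi := congrFun hx i
  have hxzi := congrFun hxz i
  simp only [mulVec_diagonal, Pi.zero_apply] at hxi hxzi ⊢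
  rcases mul_eq_zero.1 hxi with hdB | hxi
  · rw [hxzi, hdB, zero_mul]
  · rw [hxi, mul_zero]

lemma KerRangeCondition.congr [DecidableEq m] {A B : Matrix m m R} (h : KerRangeCondition A B)
    {P : Matrix m m R} (hP : IsUnit P) : KerRangeCondition (Pᵀ * A * P) (Pᵀ * B * P) := by
  have hPT : Function.Injective Pᵀ.mulVec :=
    mulVec_injective_of_isUnit ((isUnit_transpose P).2 hP)
  intro x z hx hxz
  simp only [← mulVec_mulVec] at hx hxz ⊢
  rw [h (P *ᵥ x) (P *ᵥ z) (hPT (by rw [hx, mulVec_zero])) (hPT hxz), mulVec_zero]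

lemma kerRangeCondition_congr_iff [DecidableEq m] {A B P : Matrix m m R} (hP : IsUnit P) :
    KerRangeCondition (Pᵀ * A * P) (Pᵀ * B * P) ↔ KerRangeCondition A B := by
  refine ⟨fun h => ?_, fun h => h.congr hP⟩
  have hdet := (isUnit_iff_isUnit_det P).1 hP
  have hP' : ∀ M : Matrix m m R, (P⁻¹)ᵀ * (Pᵀ * M * P) * P⁻¹ = M := fun M => by
    rw [← Matrix.mul_assoc, ← Matrix.mul_assoc, ← transpose_mul, mul_nonsing_inv P hdet,
      transpose_one, Matrix.one_mul, Matrix.mul_assoc, mul_nonsing_inv P hdet, Matrix.mul_one]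
  simpa only [hP'] using h.congr (isUnit_nonsing_inv_iff.2 hP)

lemma KerRangeCondition.submatrix {A B : Matrix m m R} (h : KerRangeCondition A B)
    (e : m' ≃ m) : KerRangeCondition (A.submatrix e e) (B.submatrix e e) := by
  have uncomp : ∀ v : m → R, v ∘ e = 0 → v = 0 := fun v hv => by
    funext i; simpa using congrFun hv (e.symm i)
  intro x z hx hxz
  simp only [submatrix_mulVec_equiv] at hx hxz ⊢
  rw [h _ _ (uncomp _ hx) (e.surjective.injective_comp_right hxz)]
  rfl

lemma KerRangeCondition.of_fromBlocks {n : Type*} [Fintype n] {A₁ B₁ : Matrix m m R}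
    {A₂ B₂ : Matrix n n R}
    (h : KerRangeCondition (fromBlocks A₁ 0 0 A₂) (fromBlocks B₁ 0 0 B₂)) :
    KerRangeCondition A₁ B₁ := by
  intro x z hx hxz
  have hblock := h (Sum.elim x 0) (Sum.elim z 0)
  simp only [fromBlocks_mulVec, Sum.elim_comp_inl, Sum.elim_comp_inr, mulVec_zero, add_zero,
    zero_mulVec, hx, Sum.elim_zero_zero] at hblock
  funext i
  simpa using congrFun (hblock trivial (by rw [hxz])) (Sum.inl i)

lemma not_kerRangeCondition_one_kronecker [Nontrivial R] {p : Type*} [Fintype p] [DecidableEq p]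
    [Nonempty p] :
    ¬ KerRangeCondition ((1 : Matrix p p R) ⊗ₖ !![0, 1; 1, 0])
      ((1 : Matrix p p R) ⊗ₖ !![1, 0; 0, 0]) := by
  intro h
  obtain ⟨i⟩ := ‹Nonempty p›
  have hx : ((1 : Matrix p p R) ⊗ₖ !![1, 0; 0, 0]) *ᵥ Pi.single (i, 1) 1 = 0 := by
    rw [mulVec_single]
    funext ⟨j, k⟩
    fin_cases k <;> simp
  have hxz : ((1 : Matrix p p R) ⊗ₖ !![0, 1; 1, 0]) *ᵥ Pi.single (i, 1) 1
      = ((1 : Matrix p p R) ⊗ₖ !![1, 0; 0, 0]) *ᵥ Pi.single (i, 0) 1 := by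
    rw [mulVec_single, mulVec_single]
    funext ⟨j, k⟩
    fin_cases k <;> simp
  simpa [mulVec_single] using congrFun (h _ _ hx hxz) (i, 0)

end Matrix

lemma Matrix.IsDiag.of_submatrix_equiv {m m' α : Type*} [Zero α] {M : Matrix m m α}
    (e : m' ≃ m) (h : (M.submatrix e e).IsDiag) : M.IsDiag := by
  simpa using h.submatrix e.symm.injective

theorem stmt11_general {n : ℕ} (A B : Matrix (Fin n) (Fin n) ℝ)
    (n0 n1 n2 n3 : ℕ)
    (e : ((Fin n0 × Fin 2) ⊕ (Fin n1 ⊕ (Fin n2 ⊕ Fin n3))) ≃ Fin n)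
    (W : Matrix (Fin n) (Fin n) ℝ) (Λ1 : Fin n1 → ℝ) (Λ2 : Fin n2 → ℝ)
    (hW : IsUnit W)
    (hcanA : (Wᵀ * A * W).submatrix e e
      = Matrix.fromBlocks ((1 : Matrix (Fin n0) (Fin n0) ℝ) ⊗ₖ !![(0:ℝ),1;1,0]) 0 0
          (Matrix.fromBlocks (Matrix.diagonal Λ1) 0 0
            (Matrix.fromBlocks (Matrix.diagonal Λ2) 0 0 0)))
    (hcanB : (Wᵀ * B * W).submatrix e e
      = Matrix.fromBlocks ((1 : Matrix (Fin n0) (Fin n0) ℝ) ⊗ₖ !![(1:ℝ),0;0,0]) 0 0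
          (Matrix.fromBlocks (1 : Matrix (Fin n1) (Fin n1) ℝ) 0 0 0)) :
    (∃ V : Matrix (Fin n) (Fin n) ℝ, IsUnit V ∧
      (∃ dA : Fin n → ℝ, Vᵀ * A * V = Matrix.diagonal dA) ∧
      (∃ dB : Fin n → ℝ, Vᵀ * B * V = Matrix.diagonal dB)) ↔ n0 = 0 := by
  constructor
  · rintro ⟨V, hV, ⟨dA, hdA⟩, ⟨dB, hdB⟩⟩
    by_contra hn0
    have : Nonempty (Fin n0) := ⟨⟨0, Nat.pos_of_ne_zero hn0⟩⟩
    have hAB : KerRangeCondition A B := by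
      rw [← kerRangeCondition_congr_iff hV, hdA, hdB]
      exact kerRangeCondition_diagonal dA dB
    have hcan := (hAB.congr hW).submatrix e
    rw [hcanA, hcanB] at hcan
    exact not_kerRangeCondition_one_kronecker hcan.of_fromBlocks
  · rintro rfl
    have hdiagA : (Wᵀ * A * W).IsDiag := IsDiag.of_submatrix_equiv e <| hcanA ▸
      (isDiag_of_subsingleton _).fromBlocks
        ((isDiag_diagonal _).fromBlocks ((isDiag_diagonal _).fromBlocks isDiag_zero))
    have hdiagB : (Wᵀ * B * W).IsDiag := IsDiag.of_submatrix_equiv e <| hcanB ▸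
      (isDiag_of_subsingleton _).fromBlocks (isDiag_one.fromBlocks isDiag_zero)
    exact ⟨W, hW, ⟨_, ((isDiag_iff_diagonal_diag _).1 hdiagA).symm⟩,
      ⟨_, ((isDiag_iff_diagonal_diag _).1 hdiagB).symm⟩⟩

/-- A symmetric semi-definite pencil A - λB (B positive semi-definite)
is simultaneously diagonalizable by a congruence iff the block size n₀ in its
canonical form is zero. -/
theorem stmt11 {n : ℕ} (A B : Matrix (Fin n) (Fin n) ℝ)
    (hA : A.IsHermitian) (hB : B.PosSemidef)
    (n0 n1 n2 n3 : ℕ)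
    (e : ((Fin n0 × Fin 2) ⊕ (Fin n1 ⊕ (Fin n2 ⊕ Fin n3))) ≃ Fin n)
    (W : Matrix (Fin n) (Fin n) ℝ) (Λ1 : Fin n1 → ℝ) (Λ2 : Fin n2 → ℝ)
    (hW : IsUnit W) (hΛ2 : ∀ i, Λ2 i ≠ 0)
    (hcanA : (Wᵀ * A * W).submatrix e e
      = Matrix.fromBlocks ((1 : Matrix (Fin n0) (Fin n0) ℝ) ⊗ₖ !![(0:ℝ),1;1,0]) 0 0
          (Matrix.fromBlocks (Matrix.diagonal Λ1) 0 0
            (Matrix.fromBlocks (Matrix.diagonal Λ2) 0 0 0)))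
    (hcanB : (Wᵀ * B * W).submatrix e e
      = Matrix.fromBlocks ((1 : Matrix (Fin n0) (Fin n0) ℝ) ⊗ₖ !![(1:ℝ),0;0,0]) 0 0
          (Matrix.fromBlocks (1 : Matrix (Fin n1) (Fin n1) ℝ) 0 0 0)) :
    (∃ V : Matrix (Fin n) (Fin n) ℝ, IsUnit V ∧
      (∃ dA : Fin n → ℝ, Vᵀ * A * V = Matrix.diagonal dA) ∧
      (∃ dB : Fin n → ℝ, Vᵀ * B * V = Matrix.diagonal dB)) ↔ n0 = 0 :=
  stmt11_general A B n0 n1 n2 n3 e W Λ1 Λ2 hW hcanA hcanB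
end

section
/- Suppose there is an invertible W = [W_1, W_2, W_3] with W^T K_G W = diag(Λ_1, Λ_2, 0) and W^T K W = diag(I_{n_1}, 0, 0), where Λ_1, Λ_2 are real diagonal and Λ_2 invertible, and W_3^T W_1 = 0, W_3^T W_2 = 0. Then for σ ≠ 0 with I_{n_1} - σΛ_1 invertible, the matrix C = (K - σK_G)† K satisfies C W = W diag((I_{n_1} - σΛ_1)^{-1}, 0, 0). -/
/-!
Write `A = K - σ K_G`, so that `Wᵀ A W = diag(I - σΛ₁, -σΛ₂, 0) =: D` and, with
`E = diag((I - σΛ₁)⁻¹, 0, 0)`, `Wᵀ K W = D E`; hence `K W = A (W E)`.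
Since `A` is symmetric, `A† A` is the orthogonal projection onto the range of `A`, so it suffices
that `W E` lies in that range. Solving `A X = W E` amounts to `D (W⁻¹ X) = Wᵀ W E`, which is
possible because the only zero rows of `D` are the last block, and there `W₃ᵀ W E = 0`
because `W₃ᵀ W₁ = 0`.
-/

open Matrix

/-- The four Moore–Penrose conditions characterizing the pseudo-inverse `P` of `A`. -/
def IsMoorePenrose {m : Type*} [Fintype m] (A P : Matrix m m ℝ) : Prop :=
  A * P * A = A ∧ P * A * P = P ∧ (A * P)ᵀ = A * P ∧ (P * A)ᵀ = P * A

theorem IsMoorePenrose.mul_mul_self_mul {m : Type*} [Fintype m] {A P : Matrix m m ℝ}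
    (hP : IsMoorePenrose A P) (hA : A.IsSymm) (X : Matrix m m ℝ) :
    P * A * (A * X) = A * X := by
  obtain ⟨hAPA, -, -, hPA⟩ := hP
  have hAPtA : A * Pᵀ * A = A := by
    simpa only [transpose_mul, hA.eq, Matrix.mul_assoc] using congrArg transpose hAPA
  calc P * A * (A * X) = (P * A)ᵀ * A * X := by rw [hPA]; simp only [Matrix.mul_assoc]
    _ = A * Pᵀ * A * X := by rw [transpose_mul, hA.eq]
    _ = A * X := by rw [hAPtA]

section Congruence

variable {m R : Type*} [Fintype m] [DecidableEq m] [Field R]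
  {A W : Matrix m m R} {d : m → R}

theorem Matrix.mul_eq_mul_mul_diagonal_of_congr_diagonal {K : Matrix m m R} {k e : m → R}
    (hW : IsUnit W) (hA : Wᵀ * A * W = diagonal d) (hK : Wᵀ * K * W = diagonal k)
    (hdek : ∀ i, d i * e i = k i) :
    K * W = A * (W * diagonal e) := by
  refine ((isUnit_transpose W).mpr hW).mul_left_cancel ?_
  rw [← Matrix.mul_assoc, hK, ← Matrix.mul_assoc, ← Matrix.mul_assoc, hA,
    diagonal_mul_diagonal]
  exact congrArg diagonal (funext hdek).symm

theorem Matrix.exists_mul_eq_of_congr_diagonal {Y : Matrix m m R}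
    (hW : IsUnit W) (hA : Wᵀ * A * W = diagonal d)
    (hY : ∀ i, d i = 0 → ∀ j, (Wᵀ * Y) i j = 0) :
    ∃ X, A * X = Y := by
  refine ⟨W * (diagonal d⁻¹ * (Wᵀ * Y)), ((isUnit_transpose W).mpr hW).mul_left_cancel ?_⟩
  rw [← Matrix.mul_assoc, ← Matrix.mul_assoc, ← Matrix.mul_assoc, hA, diagonal_mul_diagonal]
  ext i j
  rw [diagonal_mul]
  by_cases hdi : d i = 0
  · simp [hdi, hY i hdi j]
  · simp [hdi]

end Congruence

theorem stmt12_general {n1 n2 n3 : ℕ}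
    (K KG : Matrix (Fin n1 ⊕ (Fin n2 ⊕ Fin n3)) (Fin n1 ⊕ (Fin n2 ⊕ Fin n3)) ℝ)
    (hK : Kᵀ = K) (hKG : KGᵀ = KG)
    (W : Matrix (Fin n1 ⊕ (Fin n2 ⊕ Fin n3)) (Fin n1 ⊕ (Fin n2 ⊕ Fin n3)) ℝ)
    (hW : IsUnit W)
    (Λ1 : Fin n1 → ℝ) (Λ2 : Fin n2 → ℝ) (hΛ2 : ∀ i, Λ2 i ≠ 0)
    (hcanKG : Wᵀ * KG * W
      = Matrix.fromBlocks (Matrix.diagonal Λ1) 0 0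
          (Matrix.fromBlocks (Matrix.diagonal Λ2) 0 0 0))
    (hcanK : Wᵀ * K * W
      = Matrix.fromBlocks (1 : Matrix (Fin n1) (Fin n1) ℝ) 0 0 0)
    (hW31 : (W.submatrix id (Sum.inr ∘ Sum.inr : Fin n3 → _))ᵀ
      * W.submatrix id (Sum.inl : Fin n1 → _) = 0)
    (σ : ℝ) (hσ : σ ≠ 0) (hσΛ1 : ∀ i, 1 - σ * Λ1 i ≠ 0)
    (P : Matrix (Fin n1 ⊕ (Fin n2 ⊕ Fin n3)) (Fin n1 ⊕ (Fin n2 ⊕ Fin n3)) ℝ)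
    (hP : IsMoorePenrose (K - σ • KG) P) :
    (P * K) * W
      = W * Matrix.fromBlocks (Matrix.diagonal fun i => (1 - σ * Λ1 i)⁻¹) 0 0 0 := by
  set A := K - σ • KG
  set k : Fin n1 ⊕ (Fin n2 ⊕ Fin n3) → ℝ := Sum.elim 1 0
  set d := fun i => k i - σ * Sum.elim Λ1 (Sum.elim Λ2 0) i
  set e : Fin n1 ⊕ (Fin n2 ⊕ Fin n3) → ℝ := Sum.elim (fun i => (1 - σ * Λ1 i)⁻¹) 0
  have hAsymm : A.IsSymm := by
    rw [IsSymm, transpose_sub, transpose_smul, hK, hKG]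
  have hWK : Wᵀ * K * W = diagonal k := by
    rw [hcanK, ← diagonal_one, ← diagonal_zero, fromBlocks_diagonal]
    rfl
  have hWA : Wᵀ * A * W = diagonal d := by
    rw [Matrix.mul_sub, Matrix.sub_mul, Matrix.mul_smul, Matrix.smul_mul, hWK, hcanKG,
      ← diagonal_zero, fromBlocks_diagonal, fromBlocks_diagonal, ← diagonal_smul, diagonal_sub]
    rfl
  have hE : fromBlocks (diagonal fun i => (1 - σ * Λ1 i)⁻¹) 0 0 0 = diagonal e := by
    rw [← diagonal_zero, fromBlocks_diagonal]
    rfl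
  have hKW : K * W = A * (W * diagonal e) := by
    refine mul_eq_mul_mul_diagonal_of_congr_diagonal hW hWA hWK ?_
    rintro (i | i | i) <;> simp [d, k, e, hσΛ1]
  obtain ⟨X, hX⟩ : ∃ X, A * X = W * diagonal e := by
    refine exists_mul_eq_of_congr_diagonal hW hWA ?_
    rintro (i | i | i) hdi j
    · exact absurd (by simpa [d, k] using hdi) (hσΛ1 i)
    · exact absurd (by simpa [d, k] using hdi) (mul_ne_zero hσ (hΛ2 i))
    · rcases j with j | j
      · have hW31ij : (Wᵀ * W) (Sum.inr (Sum.inr i)) (Sum.inl j) = 0 := by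
          simpa [mul_apply] using congrFun (congrFun hW31 i) j
        simp [← Matrix.mul_assoc, hW31ij]
      · simp [← Matrix.mul_assoc, e]
  calc P * K * W = P * A * (A * X) := by rw [Matrix.mul_assoc, hKW, ← hX, Matrix.mul_assoc]
    _ = W * fromBlocks (diagonal fun i => (1 - σ * Λ1 i)⁻¹) 0 0 0 := by
      rw [hP.mul_mul_self_mul hAsymm, hX, hE]

/-- Given the canonical form W = [W₁ W₂ W₃] invertible with
WᵀK_GW = diag(Λ₁, Λ₂, 0), WᵀKW = diag(I, 0, 0), Λ₂ invertible, W₃ᵀW₁ = W₃ᵀW₂ = 0,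
and σ ≠ 0 with I - σΛ₁ invertible, the matrix C = (K - σK_G)†K satisfies
C W = W diag((I - σΛ₁)⁻¹, 0, 0). -/
theorem stmt12 {n1 n2 n3 : ℕ}
    (K KG : Matrix (Fin n1 ⊕ (Fin n2 ⊕ Fin n3)) (Fin n1 ⊕ (Fin n2 ⊕ Fin n3)) ℝ)
    (hK : Kᵀ = K) (hKG : KGᵀ = KG)
    (W : Matrix (Fin n1 ⊕ (Fin n2 ⊕ Fin n3)) (Fin n1 ⊕ (Fin n2 ⊕ Fin n3)) ℝ)
    (hW : IsUnit W)
    (Λ1 : Fin n1 → ℝ) (Λ2 : Fin n2 → ℝ) (hΛ2 : ∀ i, Λ2 i ≠ 0)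
    (hcanKG : Wᵀ * KG * W
      = Matrix.fromBlocks (Matrix.diagonal Λ1) 0 0
          (Matrix.fromBlocks (Matrix.diagonal Λ2) 0 0 0))
    (hcanK : Wᵀ * K * W
      = Matrix.fromBlocks (1 : Matrix (Fin n1) (Fin n1) ℝ) 0 0 0)
    (hW31 : (W.submatrix id (Sum.inr ∘ Sum.inr : Fin n3 → _))ᵀ
      * W.submatrix id (Sum.inl : Fin n1 → _) = 0)
    (hW32 : (W.submatrix id (Sum.inr ∘ Sum.inr : Fin n3 → _))ᵀ
      * W.submatrix id (Sum.inr ∘ Sum.inl : Fin n2 → _) = 0)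
    (σ : ℝ) (hσ : σ ≠ 0) (hσΛ1 : ∀ i, 1 - σ * Λ1 i ≠ 0)
    (P : Matrix (Fin n1 ⊕ (Fin n2 ⊕ Fin n3)) (Fin n1 ⊕ (Fin n2 ⊕ Fin n3)) ℝ)
    (hP : IsMoorePenrose (K - σ • KG) P) :
    (P * K) * W
      = W * Matrix.fromBlocks (Matrix.diagonal fun i => (1 - σ * Λ1 i)⁻¹) 0 0 0 :=
  stmt12_general K KG hK hKG W hW Λ1 Λ2 hΛ2 hcanKG hcanK hW31 σ hσ hσΛ1 P hP
end

section
/- Under the canonical form hypotheses on (K, K_G) as in the previous context, (λ, x) is an eigenpair of K x = λ K_G x with λ finite and nonzero and x ⟂ Z_c (the common nullspace of K and K_G) if and only if (μ, x) with μ = λ/(λ - σ) is an eigenpair of C = (K - σK_G)† K with μ ∉ {0, 1} and x ⟂ Z_c. -/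
open Matrix

section StmtAux

variable {n1 n2 n3 : ℕ}

private lemma aux_mulW3 (X W : Matrix (Fin n1 ⊕ (Fin n2 ⊕ Fin n3)) (Fin n1 ⊕ (Fin n2 ⊕ Fin n3)) ℝ)
    (hW : IsUnit W) (d : Fin n1 ⊕ (Fin n2 ⊕ Fin n3) → ℝ)
    (hcan : Wᵀ * X * W = Matrix.diagonal d)
    (hd : ∀ j, d (Sum.inr (Sum.inr j)) = 0) :
    X * W.submatrix id (Sum.inr ∘ Sum.inr : Fin n3 → _) = 0 := by
  have hWT : IsUnit Wᵀ := (Matrix.isUnit_transpose W).mpr hW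
  have h1 : Wᵀ⁻¹ * Wᵀ = 1 :=
    Matrix.nonsing_inv_mul _ ((Matrix.isUnit_iff_isUnit_det _).mp hWT)
  have hXW : X * W = Wᵀ⁻¹ * Matrix.diagonal d := by
    calc X * W = (Wᵀ⁻¹ * Wᵀ) * (X * W) := by rw [h1, one_mul]
    _ = Wᵀ⁻¹ * (Wᵀ * X * W) := by simp only [Matrix.mul_assoc]
    _ = Wᵀ⁻¹ * Matrix.diagonal d := by rw [hcan]
  ext i j
  have he : (X * W.submatrix id (Sum.inr ∘ Sum.inr : Fin n3 → _)) i j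
      = (X * W) i (Sum.inr (Sum.inr j)) := by
    simp [Matrix.mul_apply, Matrix.submatrix]
  rw [he, hXW, Matrix.mul_diagonal, hd, mul_zero]
  rfl

private lemma aux_null (X W : Matrix (Fin n1 ⊕ (Fin n2 ⊕ Fin n3)) (Fin n1 ⊕ (Fin n2 ⊕ Fin n3)) ℝ)
    (hW : IsUnit W) (d : Fin n1 ⊕ (Fin n2 ⊕ Fin n3) → ℝ)
    (hcan : Wᵀ * X * W = Matrix.diagonal d)
    (hd1 : ∀ i, d (Sum.inl i) ≠ 0) (hd2 : ∀ i, d (Sum.inr (Sum.inl i)) ≠ 0)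
    (z : Fin n1 ⊕ (Fin n2 ⊕ Fin n3) → ℝ) (hz : X.mulVec z = 0) :
    ∃ c, z = (W.submatrix id (Sum.inr ∘ Sum.inr : Fin n3 → _)).mulVec c := by
  have hdet : IsUnit W.det := (Matrix.isUnit_iff_isUnit_det _).mp hW
  set y := W⁻¹.mulVec z with hy
  have hzy : z = W.mulVec y := by
    rw [hy, Matrix.mulVec_mulVec, Matrix.mul_nonsing_inv _ hdet, Matrix.one_mulVec]
  have hDy : (Matrix.diagonal d).mulVec y = 0 := by
    rw [← hcan]
    have : (Wᵀ * X * W).mulVec y = Wᵀ.mulVec (X.mulVec (W.mulVec y)) := by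
      simp only [Matrix.mulVec_mulVec, Matrix.mul_assoc]
    rw [this, ← hzy, hz, Matrix.mulVec_zero]
  have hcomp : ∀ k, d k * y k = 0 := by
    intro k
    have := congrFun hDy k
    rwa [Matrix.mulVec_diagonal] at this
  have hy1 : ∀ a, y (Sum.inl a) = 0 := fun a =>
    (mul_eq_zero.mp (hcomp (Sum.inl a))).resolve_left (hd1 a)
  have hy2 : ∀ a, y (Sum.inr (Sum.inl a)) = 0 := fun a =>
    (mul_eq_zero.mp (hcomp (Sum.inr (Sum.inl a)))).resolve_left (hd2 a)
  refine ⟨fun j => y (Sum.inr (Sum.inr j)), ?_⟩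
  rw [hzy]
  ext i
  simp [Matrix.mulVec, dotProduct, Fintype.sum_sum_type, hy1, hy2, Matrix.submatrix]

private lemma aux_proj (A Q W : Matrix (Fin n1 ⊕ (Fin n2 ⊕ Fin n3)) (Fin n1 ⊕ (Fin n2 ⊕ Fin n3)) ℝ)
    (hW : IsUnit W) (d : Fin n1 ⊕ (Fin n2 ⊕ Fin n3) → ℝ)
    (hcan : Wᵀ * A * W = Matrix.diagonal d)
    (hd1 : ∀ i, d (Sum.inl i) ≠ 0) (hd2 : ∀ i, d (Sum.inr (Sum.inl i)) ≠ 0)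
    (hd3 : ∀ j, d (Sum.inr (Sum.inr j)) = 0)
    (h1 : A * Q * A = A) (h2 : (Q * A)ᵀ = Q * A)
    (v : Fin n1 ⊕ (Fin n2 ⊕ Fin n3) → ℝ)
    (hv : (W.submatrix id (Sum.inr ∘ Sum.inr : Fin n3 → _))ᵀ.mulVec v = 0) :
    (Q * A).mulVec v = v := by
  set W3 := W.submatrix id (Sum.inr ∘ Sum.inr : Fin n3 → _) with hW3
  have hAW3 : A * W3 = 0 := aux_mulW3 A W hW d hcan hd3
  set u := v - (Q * A).mulVec v with hu
  have hAu : A.mulVec u = 0 := by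
    rw [hu, Matrix.mulVec_sub, Matrix.mulVec_mulVec, ← Matrix.mul_assoc, h1, sub_self]
  obtain ⟨c, hc⟩ := aux_null A W hW d hcan hd1 hd2 u hAu
  have h3 : W3ᵀ * (Q * A) = 0 := by
    calc W3ᵀ * (Q * A) = W3ᵀ * (Q * A)ᵀ := by rw [h2]
    _ = ((Q * A) * W3)ᵀ := by rw [Matrix.transpose_mul (Q * A) W3]
    _ = (Q * (A * W3))ᵀ := by rw [Matrix.mul_assoc]
    _ = 0 := by rw [hAW3, Matrix.mul_zero, Matrix.transpose_zero]
  have hW3u : W3ᵀ.mulVec u = 0 := by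
    rw [hu, Matrix.mulVec_sub, hv, Matrix.mulVec_mulVec, h3, Matrix.zero_mulVec, sub_self]
  have huu : u ⬝ᵥ u = 0 := by
    calc u ⬝ᵥ u = u ⬝ᵥ W3.mulVec c := by rw [← hc]
    _ = (u ᵥ* W3) ⬝ᵥ c := Matrix.dotProduct_mulVec u W3 c
    _ = (W3ᵀ.mulVec u) ⬝ᵥ c := by rw [Matrix.mulVec_transpose]
    _ = 0 := by rw [hW3u, zero_dotProduct]
  have hu0 : u = 0 := dotProduct_self_eq_zero.mp huu
  exact (sub_eq_zero.mp (hu ▸ hu0 : v - (Q * A).mulVec v = 0)).symm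

end StmtAux

/-- Under the canonical form hypotheses, (λ, x) is an eigenpair of
K x = λ K_G x with λ finite nonzero and x ⟂ Z_c iff (μ, x) with μ = λ/(λ-σ) is an
eigenpair of C = (K - σK_G)†K with μ ∉ {0,1} and x ⟂ Z_c. -/
theorem stmt13 {n1 n2 n3 : ℕ}
    (K KG : Matrix (Fin n1 ⊕ (Fin n2 ⊕ Fin n3)) (Fin n1 ⊕ (Fin n2 ⊕ Fin n3)) ℝ)
    (hK : Kᵀ = K) (hKG : KGᵀ = KG)
    (W : Matrix (Fin n1 ⊕ (Fin n2 ⊕ Fin n3)) (Fin n1 ⊕ (Fin n2 ⊕ Fin n3)) ℝ)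
    (hW : IsUnit W)
    (Λ1 : Fin n1 → ℝ) (Λ2 : Fin n2 → ℝ) (hΛ2 : ∀ i, Λ2 i ≠ 0)
    (hcanKG : Wᵀ * KG * W
      = Matrix.fromBlocks (Matrix.diagonal Λ1) 0 0
          (Matrix.fromBlocks (Matrix.diagonal Λ2) 0 0 0))
    (hcanK : Wᵀ * K * W
      = Matrix.fromBlocks (1 : Matrix (Fin n1) (Fin n1) ℝ) 0 0 0)
    (hW31 : (W.submatrix id (Sum.inr ∘ Sum.inr : Fin n3 → _))ᵀ
      * W.submatrix id (Sum.inl : Fin n1 → _) = 0)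
    (hW32 : (W.submatrix id (Sum.inr ∘ Sum.inr : Fin n3 → _))ᵀ
      * W.submatrix id (Sum.inr ∘ Sum.inl : Fin n2 → _) = 0)
    (σ : ℝ) (hσ : σ ≠ 0) (hσΛ1 : ∀ i, 1 - σ * Λ1 i ≠ 0)
    (P : Matrix (Fin n1 ⊕ (Fin n2 ⊕ Fin n3)) (Fin n1 ⊕ (Fin n2 ⊕ Fin n3)) ℝ)
    (hP : IsMoorePenrose (K - σ • KG) P)
    (x : Fin n1 ⊕ (Fin n2 ⊕ Fin n3) → ℝ) (hx : x ≠ 0)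
    (lam : ℝ) (hlam : lam ≠ 0) :
    (K.mulVec x = lam • KG.mulVec x ∧
        (∀ z, K.mulVec z = 0 → KG.mulVec z = 0 → x ⬝ᵥ z = 0))
      ↔ ((P * K).mulVec x = (lam / (lam - σ)) • x ∧
          lam / (lam - σ) ≠ 0 ∧ lam / (lam - σ) ≠ 1 ∧
          (∀ z, K.mulVec z = 0 → KG.mulVec z = 0 → x ⬝ᵥ z = 0)) := by
  set A := K - σ • KG with hAdef
  set W3 := W.submatrix id (Sum.inr ∘ Sum.inr : Fin n3 → _) with hW3def
  set dK : Fin n1 ⊕ (Fin n2 ⊕ Fin n3) → ℝ := Sum.elim 1 0 with hdK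
  set dG : Fin n1 ⊕ (Fin n2 ⊕ Fin n3) → ℝ := Sum.elim Λ1 (Sum.elim Λ2 0) with hdG
  set dA : Fin n1 ⊕ (Fin n2 ⊕ Fin n3) → ℝ := dK - σ • dG with hdA
  have hcanK' : Wᵀ * K * W = Matrix.diagonal dK := by
    rw [hcanK, hdK, ← Matrix.diagonal_one, ← Matrix.diagonal_zero, Matrix.fromBlocks_diagonal]
    rfl
  have hcanG' : Wᵀ * KG * W = Matrix.diagonal dG := by
    rw [hcanKG, hdG]
    rw [show Matrix.fromBlocks (Matrix.diagonal Λ2) 0 0 (0 : Matrix (Fin n3) (Fin n3) ℝ)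
        = Matrix.diagonal (Sum.elim Λ2 (0 : Fin n3 → ℝ)) by
      rw [← Matrix.diagonal_zero, Matrix.fromBlocks_diagonal]
      rfl]
    rw [Matrix.fromBlocks_diagonal]
  have hcanA : Wᵀ * A * W = Matrix.diagonal dA := by
    have h : Wᵀ * A * W = Wᵀ * K * W - σ • (Wᵀ * KG * W) := by
      rw [hAdef, Matrix.mul_sub, Matrix.sub_mul, Matrix.mul_smul, Matrix.smul_mul]
    rw [h, hcanK', hcanG', hdA]
    ext i j
    simp [Matrix.diagonal_apply]
    split <;> simp
  have hd1 : ∀ i, dA (Sum.inl i) ≠ 0 := by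
    intro i
    have : dA (Sum.inl i) = 1 - σ * Λ1 i := by simp [hdA, hdK, hdG]
    rw [this]; exact hσΛ1 i
  have hd2 : ∀ i, dA (Sum.inr (Sum.inl i)) ≠ 0 := by
    intro i
    have : dA (Sum.inr (Sum.inl i)) = -(σ * Λ2 i) := by simp [hdA, hdK, hdG]
    rw [this]
    exact neg_ne_zero.mpr (mul_ne_zero hσ (hΛ2 i))
  have hd3 : ∀ j, dA (Sum.inr (Sum.inr j)) = 0 := by
    intro j; simp [hdA, hdK, hdG]
  have hKW3 : K * W3 = 0 :=
    aux_mulW3 K W hW dK hcanK' (by intro j; simp [hdK])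
  have hGW3 : KG * W3 = 0 :=
    aux_mulW3 KG W hW dG hcanG' (by intro j; simp [hdG])
  have hperp : (∀ z, K.mulVec z = 0 → KG.mulVec z = 0 → x ⬝ᵥ z = 0) →
      W3ᵀ.mulVec x = 0 := by
    intro hZ
    funext j
    have hcol : (fun i => W3 i j) = W3.mulVec (Pi.single j 1) := by
      funext i; simp
    have hKz : K.mulVec (W3.mulVec (Pi.single j 1)) = 0 := by
      rw [Matrix.mulVec_mulVec, hKW3, Matrix.zero_mulVec]
    have hGz : KG.mulVec (W3.mulVec (Pi.single j 1)) = 0 := by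
      rw [Matrix.mulVec_mulVec, hGW3, Matrix.zero_mulVec]
    have h0 := hZ _ hKz hGz
    have he : (W3ᵀ.mulVec x) j = x ⬝ᵥ (W3.mulVec (Pi.single j 1)) := by
      rw [← hcol]
      simp [Matrix.mulVec, dotProduct, Matrix.transpose_apply, mul_comm]
    rw [Pi.zero_apply, he, h0]
  constructor
  · rintro ⟨heig, hZ⟩
    have hx3 := hperp hZ
    have hlamσ : lam - σ ≠ 0 := by
      intro h0
      have hAx : A.mulVec x = 0 := by
        have : A.mulVec x = K.mulVec x - σ • KG.mulVec x := by
          rw [hAdef, Matrix.sub_mulVec, Matrix.smul_mulVec]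
        rw [this, heig, ← sub_smul, h0, zero_smul]
      obtain ⟨c, hc⟩ := aux_null A W hW dA hcanA hd1 hd2 x hAx
      apply hx
      apply dotProduct_self_eq_zero.mp
      calc x ⬝ᵥ x = x ⬝ᵥ W3.mulVec c := by rw [← hW3def] at hc; rw [← hc]
      _ = (x ᵥ* W3) ⬝ᵥ c := Matrix.dotProduct_mulVec x W3 c
      _ = (W3ᵀ.mulVec x) ⬝ᵥ c := by rw [Matrix.mulVec_transpose]
      _ = 0 := by rw [hx3, zero_dotProduct]
    refine ⟨?_, div_ne_zero hlam hlamσ, ?_, hZ⟩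
    · have hKxA : K.mulVec x = (lam / (lam - σ)) • A.mulVec x := by
        have hAx : A.mulVec x = (lam - σ) • KG.mulVec x := by
          rw [hAdef, Matrix.sub_mulVec, Matrix.smul_mulVec, heig, ← sub_smul]
        rw [hAx, smul_smul, div_mul_cancel₀ _ hlamσ, heig]
      calc (P * K).mulVec x = P.mulVec (K.mulVec x) := (Matrix.mulVec_mulVec x P K).symm
      _ = (lam / (lam - σ)) • P.mulVec (A.mulVec x) := by rw [hKxA, Matrix.mulVec_smul]
      _ = (lam / (lam - σ)) • (P * A).mulVec x := by rw [Matrix.mulVec_mulVec]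
      _ = (lam / (lam - σ)) • x := by
          rw [aux_proj A P W hW dA hcanA hd1 hd2 hd3 hP.1 hP.2.2.2 x hx3]
    · intro h1
      rw [div_eq_one_iff_eq hlamσ] at h1
      exact hσ (by linarith)
  · rintro ⟨heig, hμ0, hμ1, hZ⟩
    refine ⟨?_, hZ⟩
    have hx3 := hperp hZ
    have hlamσ : lam - σ ≠ 0 := fun h0 => hμ0 (by rw [h0, div_zero])
    have hAT : Aᵀ = A := by
      rw [hAdef, Matrix.transpose_sub, Matrix.transpose_smul, hK, hKG]
    have hPA3 : Pᵀ * A = A * P := by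
      calc Pᵀ * A = Pᵀ * Aᵀ := by rw [hAT]
      _ = (A * P)ᵀ := by rw [Matrix.transpose_mul A P]
      _ = A * P := hP.2.2.1
    have h1' : A * Pᵀ * A = A := by
      have h := congrArg Matrix.transpose hP.1
      rw [Matrix.transpose_mul (A * P) A, Matrix.transpose_mul A P, hAT] at h
      rw [← Matrix.mul_assoc] at h
      exact h
    have h2' : (Pᵀ * A)ᵀ = Pᵀ * A := by
      rw [Matrix.transpose_mul Pᵀ A, Matrix.transpose_transpose, hAT]
      exact hPA3.symm
    have hKx3 : W3ᵀ.mulVec (K.mulVec x) = 0 := by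
      rw [Matrix.mulVec_mulVec]
      have h : W3ᵀ * K = 0 := by
        calc W3ᵀ * K = W3ᵀ * Kᵀ := by rw [hK]
        _ = (K * W3)ᵀ := by rw [Matrix.transpose_mul K W3]
        _ = 0 := by rw [hKW3, Matrix.transpose_zero]
      rw [h, Matrix.zero_mulVec]
    have hproj := aux_proj A Pᵀ W hW dA hcanA hd1 hd2 hd3 h1' h2' (K.mulVec x) hKx3
    rw [hPA3] at hproj
    have hKA : K.mulVec x = (lam / (lam - σ)) • A.mulVec x := by
      have h := congrArg A.mulVec heig
      rw [Matrix.mulVec_smul] at h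
      have hL : A.mulVec ((P * K).mulVec x) = K.mulVec x := by
        have e : A.mulVec ((P * K).mulVec x) = (A * P).mulVec (K.mulVec x) := by
          rw [Matrix.mulVec_mulVec, Matrix.mulVec_mulVec, Matrix.mul_assoc]
        rw [e, hproj]
      rw [hL] at h
      exact h
    have hAx : A.mulVec x = K.mulVec x - σ • KG.mulVec x := by
      rw [hAdef, Matrix.sub_mulVec, Matrix.smul_mulVec]
    rw [hAx] at hKA
    funext i
    have hi := congrFun hKA i
    simp only [Pi.smul_apply, Pi.sub_apply, smul_eq_mul] at hi
    set a := K.mulVec x i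
    set b := KG.mulVec x i
    show a = lam * b
    have e2 : σ * a = σ * (lam * b) := by
      field_simp at hi
      linarith
    exact mul_left_cancel₀ hσ e2
end

section
/- Let K be symmetric positive semi-definite and K_G symmetric, with the canonical form: invertible W = [W_1, W_2, W_3], W^T K_G W = diag(Λ_1, Λ_2, 0), W^T K W = diag(I_{n_1}, 0, 0), Λ_2 invertible, and W_3^T W_1 = W_3^T W_2 = 0. Let Z = [Z_N, Z_C] be a basis of N(K) with Z_C a basis of the common nullspace Z_c. Then for any positive definite matrices H_N, H_C, the matrix M = K + (K_G Z_N) H_N (K_G Z_N)^T + Z_C H_C Z_C^T is positive definite. -/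
/-!
If `M x = 0` then, all three summands being positive semidefinite, `K x = 0`, `(K_G Z_N)ᵀ x = 0`
and `Z_Cᵀ x = 0`. As `K_G Z_C = 0`, the vector `K_G x` is then orthogonal to `N(K) = range Z`.
In the coordinates given by `W`, `N(K)` is spanned by the last two blocks and `Wᵀ K_G W` has a zero
upper right block, so this orthogonality forces `K_G x = 0`. Hence `x ∈ N(K) ∩ N(K_G) = range Z_C`
while `Z_Cᵀ x = 0`, so `x = 0`.
-/

open Matrix

namespace Matrix

section PosSemidef

open scoped ComplexOrder

variable {𝕜 n m : Type*} [RCLike 𝕜] [Fintype n] [Fintype m]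

lemma PosSemidef.posDef_of_mulVec_eq_zero {A : Matrix n n 𝕜} (hA : A.PosSemidef)
    (h : ∀ x, A *ᵥ x = 0 → x = 0) : A.PosDef := by
  classical
  refine hA.posDef_iff_isUnit.mpr (mulVec_injective_iff_isUnit.mp ?_)
  exact (injective_iff_map_eq_zero A.mulVecLin).mpr h

lemma PosSemidef.add_mulVec_eq_zero_iff {A B : Matrix n n 𝕜} (hA : A.PosSemidef)
    (hB : B.PosSemidef) {x : n → 𝕜} :
    (A + B) *ᵥ x = 0 ↔ A *ᵥ x = 0 ∧ B *ᵥ x = 0 := by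
  refine ⟨fun h => ?_, fun ⟨hAx, hBx⟩ => by rw [add_mulVec, hAx, hBx, add_zero]⟩
  have hsum : star x ⬝ᵥ A *ᵥ x + star x ⬝ᵥ B *ᵥ x = 0 := by
    rw [← dotProduct_add, ← add_mulVec, h, dotProduct_zero]
  obtain ⟨hqA, hqB⟩ := (add_eq_zero_iff_of_nonneg (hA.dotProduct_mulVec_nonneg x)
    (hB.dotProduct_mulVec_nonneg x)).mp hsum
  exact ⟨(hA.dotProduct_mulVec_zero_iff x).mp hqA, (hB.dotProduct_mulVec_zero_iff x).mp hqB⟩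

lemma PosDef.mul_mul_conjTranspose_mulVec_eq_zero_iff {H : Matrix m m 𝕜} (hH : H.PosDef)
    (A : Matrix n m 𝕜) {x : n → 𝕜} : (A * H * Aᴴ) *ᵥ x = 0 ↔ Aᴴ *ᵥ x = 0 := by
  refine ⟨fun h => ?_, fun h => by rw [← mulVec_mulVec, h, mulVec_zero]⟩
  have hq : star (Aᴴ *ᵥ x) ⬝ᵥ H *ᵥ (Aᴴ *ᵥ x) = 0 := by
    rw [star_mulVec, conjTranspose_conjTranspose, ← dotProduct_mulVec, mulVec_mulVec,
      mulVec_mulVec, h, dotProduct_zero]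
  by_contra hne
  exact (hH.dotProduct_mulVec_pos hne).ne' hq

end PosSemidef

section Canonical

variable {R n : Type*} [CommRing R] [Fintype n]

/-- The radical of the bilinear form of `G` restricted to `ker K` is contained in `ker G`. -/
def RadicalOnKerLEKer (K G : Matrix n n R) : Prop :=
  ∀ x, K *ᵥ x = 0 → (∀ w, K *ᵥ w = 0 → w ⬝ᵥ G *ᵥ x = 0) → G *ᵥ x = 0

lemma RadicalOnKerLEKer.of_transpose_mul_mul [DecidableEq n] {K G W : Matrix n n R}
    (hW : IsUnit W) (h : RadicalOnKerLEKer (Wᵀ * K * W) (Wᵀ * G * W)) :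
    RadicalOnKerLEKer K G := by
  have hWt : Function.Injective Wᵀ.mulVec :=
    mulVec_injective_of_isUnit ((isUnit_transpose W).mpr hW)
  have hcongr : ∀ (A : Matrix n n R) t, (Wᵀ * A * W) *ᵥ t = Wᵀ *ᵥ (A *ᵥ (W *ᵥ t)) := by
    intro A t
    rw [mulVec_mulVec, mulVec_mulVec, Matrix.mul_assoc]
  intro x hKx hperp
  obtain ⟨t, rfl⟩ := mulVec_surjective_iff_isUnit.mpr hW x
  refine hWt ?_
  rw [mulVec_zero, ← hcongr]
  refine h t (by rw [hcongr, hKx, mulVec_zero]) fun u hu => ?_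
  rw [hcongr, dotProduct_mulVec, vecMul_transpose]
  refine hperp _ (hWt ?_)
  rwa [mulVec_zero, ← hcongr]

lemma dotProduct_eq_zero_of_mem_range {k : Type*} [Fintype k] {Z : Matrix n k R} {v w : n → R}
    (hv : Zᵀ *ᵥ v = 0) (hw : w ∈ LinearMap.range Z.mulVecLin) : w ⬝ᵥ v = 0 := by
  obtain ⟨y, rfl⟩ := hw
  rw [mulVecLin_apply, dotProduct_comm, dotProduct_mulVec, ← mulVec_transpose, hv,
    zero_dotProduct]

lemma radicalOnKerLEKer_fromBlocks {m p : Type*} [Fintype m] [Fintype p] [DecidableEq m]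
    [DecidableEq p] (A : Matrix m m R) (C : Matrix p m R) (D : Matrix p p R) :
    RadicalOnKerLEKer (fromBlocks 1 0 0 0) (fromBlocks A 0 C D) := by
  intro t hKt hperp
  have ht : ∀ i, t (Sum.inl i) = 0 := fun i => by
    simpa [fromBlocks_mulVec] using congrFun hKt (Sum.inl i)
  funext j
  rcases j with i | k
  · have ht' : t ∘ Sum.inl = 0 := funext ht
    simp [fromBlocks_mulVec, ht']
  · simpa using hperp (Pi.single (Sum.inr k) 1) (by funext j; rcases j with i | k' <;> simp)

end Canonical

end Matrix

theorem stmt15_general {n1 n2 n3 : ℕ}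
    (K KG : Matrix (Fin n1 ⊕ (Fin n2 ⊕ Fin n3)) (Fin n1 ⊕ (Fin n2 ⊕ Fin n3)) ℝ)
    (hKpsd : K.PosSemidef) (hKG : KGᵀ = KG)
    (W : Matrix (Fin n1 ⊕ (Fin n2 ⊕ Fin n3)) (Fin n1 ⊕ (Fin n2 ⊕ Fin n3)) ℝ)
    (hW : IsUnit W)
    (Λ1 : Fin n1 → ℝ) (Λ2 : Fin n2 → ℝ)
    (hcanKG : Wᵀ * KG * W
      = Matrix.fromBlocks (Matrix.diagonal Λ1) 0 0
          (Matrix.fromBlocks (Matrix.diagonal Λ2) 0 0 0))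
    (hcanK : Wᵀ * K * W
      = Matrix.fromBlocks (1 : Matrix (Fin n1) (Fin n1) ℝ) 0 0 0)
    (ZN : Matrix (Fin n1 ⊕ (Fin n2 ⊕ Fin n3)) (Fin n2) ℝ)
    (ZC : Matrix (Fin n1 ⊕ (Fin n2 ⊕ Fin n3)) (Fin n3) ℝ)
    (hZspan : LinearMap.range (Matrix.fromCols ZN ZC).mulVecLin
      = LinearMap.ker K.mulVecLin)
    (hZCspan : LinearMap.range ZC.mulVecLin
      = LinearMap.ker K.mulVecLin ⊓ LinearMap.ker KG.mulVecLin)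
    (HN : Matrix (Fin n2) (Fin n2) ℝ) (HC : Matrix (Fin n3) (Fin n3) ℝ)
    (hHN : HN.PosDef) (hHC : HC.PosDef) :
    (K + (KG * ZN) * HN * (KG * ZN)ᵀ + ZC * HC * ZCᵀ).PosDef := by
  have hradical : RadicalOnKerLEKer K KG := .of_transpose_mul_mul hW <| by
    rw [hcanK, hcanKG]
    exact radicalOnKerLEKer_fromBlocks _ _ _
  have hKGZC : KG * ZC = 0 := by
    refine mulVec_injective (funext fun c => ?_)
    rw [← mulVec_mulVec, zero_mulVec]
    exact (hZCspan ▸ LinearMap.mem_range_self ZC.mulVecLin c).2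
  simp only [← conjTranspose_eq_transpose_of_trivial]
  have hP := hHN.posSemidef.mul_mul_conjTranspose_same (KG * ZN)
  have hQ := hHC.posSemidef.mul_mul_conjTranspose_same ZC
  refine ((hKpsd.add hP).add hQ).posDef_of_mulVec_eq_zero fun x hx => ?_
  rw [(hKpsd.add hP).add_mulVec_eq_zero_iff hQ, hKpsd.add_mulVec_eq_zero_iff hP,
    hHN.mul_mul_conjTranspose_mulVec_eq_zero_iff, hHC.mul_mul_conjTranspose_mulVec_eq_zero_iff,
    conjTranspose_eq_transpose_of_trivial, conjTranspose_eq_transpose_of_trivial] at hx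
  obtain ⟨⟨hKx, hKGZNx⟩, hZCx⟩ := hx
  have hZKGx : (fromCols ZN ZC)ᵀ *ᵥ (KG *ᵥ x) = 0 := by
    rw [mulVec_mulVec, ← hKG, ← transpose_mul, mul_fromCols, hKGZC, transpose_fromCols,
      fromRows_mulVec, hKGZNx, transpose_zero, zero_mulVec, Sum.elim_zero_zero]
  have hKGx : KG *ᵥ x = 0 := hradical x hKx fun w hw =>
    dotProduct_eq_zero_of_mem_range hZKGx (hZspan ▸ hw)
  have hxZC : x ∈ LinearMap.range ZC.mulVecLin := hZCspan ▸ ⟨hKx, hKGx⟩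
  exact dotProduct_self_eq_zero.mp (dotProduct_eq_zero_of_mem_range hZCx hxZC)

/-- With K positive semi-definite, the canonical form of (K, K_G),
Z = [Z_N Z_C] a basis of N(K), Z_C a basis of the common nullspace Z_c, and H_N, H_C
positive definite, the matrix M = K + (K_G Z_N) H_N (K_G Z_N)ᵀ + Z_C H_C Z_Cᵀ is
positive definite. -/
theorem stmt15 {n1 n2 n3 : ℕ}
    (K KG : Matrix (Fin n1 ⊕ (Fin n2 ⊕ Fin n3)) (Fin n1 ⊕ (Fin n2 ⊕ Fin n3)) ℝ)
    (hKpsd : K.PosSemidef) (hKG : KGᵀ = KG)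
    (W : Matrix (Fin n1 ⊕ (Fin n2 ⊕ Fin n3)) (Fin n1 ⊕ (Fin n2 ⊕ Fin n3)) ℝ)
    (hW : IsUnit W)
    (Λ1 : Fin n1 → ℝ) (Λ2 : Fin n2 → ℝ) (hΛ2 : ∀ i, Λ2 i ≠ 0)
    (hcanKG : Wᵀ * KG * W
      = Matrix.fromBlocks (Matrix.diagonal Λ1) 0 0
          (Matrix.fromBlocks (Matrix.diagonal Λ2) 0 0 0))
    (hcanK : Wᵀ * K * W
      = Matrix.fromBlocks (1 : Matrix (Fin n1) (Fin n1) ℝ) 0 0 0)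
    (hW31 : (W.submatrix id (Sum.inr ∘ Sum.inr : Fin n3 → _))ᵀ
      * W.submatrix id (Sum.inl : Fin n1 → _) = 0)
    (hW32 : (W.submatrix id (Sum.inr ∘ Sum.inr : Fin n3 → _))ᵀ
      * W.submatrix id (Sum.inr ∘ Sum.inl : Fin n2 → _) = 0)
    (ZN : Matrix (Fin n1 ⊕ (Fin n2 ⊕ Fin n3)) (Fin n2) ℝ)
    (ZC : Matrix (Fin n1 ⊕ (Fin n2 ⊕ Fin n3)) (Fin n3) ℝ)
    (hZind : LinearIndependent ℝ (Matrix.fromCols ZN ZC)ᵀ)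
    (hZspan : LinearMap.range (Matrix.fromCols ZN ZC).mulVecLin
      = LinearMap.ker K.mulVecLin)
    (hZCind : LinearIndependent ℝ ZCᵀ)
    (hZCspan : LinearMap.range ZC.mulVecLin
      = LinearMap.ker K.mulVecLin ⊓ LinearMap.ker KG.mulVecLin)
    (HN : Matrix (Fin n2) (Fin n2) ℝ) (HC : Matrix (Fin n3) (Fin n3) ℝ)
    (hHN : HN.PosDef) (hHC : HC.PosDef) :
    (K + (KG * ZN) * HN * (KG * ZN)ᵀ + ZC * HC * ZCᵀ).PosDef :=
  stmt15_general K KG hKpsd hKG W hW Λ1 Λ2 hcanKG hcanK ZN ZC hZspan hZCspan HN HC hHN hHC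
end

section
/- With M = K + (K_G Z_N) H_N (K_G Z_N)^T + Z_C H_C Z_C^T as above and C = (K - σK_G)† K, the matrix M C is symmetric; equivalently, C is self-adjoint with respect to the inner product ⟨x, y⟩_M = x^T M y. -/
/-!
Because `W` brings `K` and `K_G` to canonical form and `1 - σλᵢ ≠ 0`, the range of `K` lies in
the range of `A = K - σK_G`, say `K = A Q`. Then `A A† K = K`, so `K A† K = Qᵀ A A† A Q = Qᵀ A Q`
is symmetric. The two correction terms of `M` annihilate `A† K`: `Z_Cᵀ A† K = (A† A Z_C)ᵀ Q = 0`
because `A Z_C = 0`, and `σ Z_Nᵀ K_G A† K = Z_Nᵀ (K - A) A† K = Z_Nᵀ K - Z_Nᵀ K = 0`.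
Hence `M A† K = K A† K`.
-/

open Matrix

namespace Matrix

theorem mul_eq_zero_of_range_le_ker {R l m n : Type*} [CommSemiring R] [Fintype m] [Fintype n]
    [DecidableEq n] {B : Matrix l m R} {Z : Matrix m n R}
    (h : LinearMap.range Z.mulVecLin ≤ LinearMap.ker B.mulVecLin) : B * Z = 0 :=
  toLin'.injective <| by
    rwa [LinearMap.range_le_ker_iff, ← mulVecLin_mul, ← toLin'_apply', ← map_zero toLin'] at h

theorem range_mulVecLin_le_fromCols_left {R m n₁ n₂ : Type*} [CommSemiring R] [Fintype n₁]
    [Fintype n₂] (A₁ : Matrix m n₁ R) (A₂ : Matrix m n₂ R) :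
    LinearMap.range A₁.mulVecLin ≤ LinearMap.range (fromCols A₁ A₂).mulVecLin := by
  rintro _ ⟨v, rfl⟩
  exact ⟨Sum.elim v 0, by simp⟩

theorem exists_mul_eq_of_transpose_mul_mul_mul_eq {R m : Type*} [CommRing R] [Fintype m]
    [DecidableEq m] {A K W G : Matrix m m R} (hW : IsUnit W)
    (h : Wᵀ * A * W * G = Wᵀ * K * W) : ∃ Q, A * Q = K := by
  refine ⟨W * G * W⁻¹, ?_⟩
  have hAWG : A * W * G = K * W :=
    ((isUnit_transpose W).2 hW).mul_left_cancel (by simpa only [Matrix.mul_assoc] using h)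
  rw [← Matrix.mul_assoc, ← Matrix.mul_assoc, hAWG,
    mul_nonsing_inv_cancel_right _ _ ((isUnit_iff_isUnit_det W).1 hW)]

theorem fromBlocks_one_sub_smul_mul_fromBlocks_diagonal_inv {𝕜 n o : Type*} [Field 𝕜]
    [Fintype n] [Fintype o] [DecidableEq n] [DecidableEq o] (Λ : n → 𝕜) (D : Matrix o o 𝕜)
    (σ : 𝕜) (h : ∀ i, 1 - σ * Λ i ≠ 0) :
    (fromBlocks 1 0 0 0 - σ • fromBlocks (diagonal Λ) 0 0 D) *
        fromBlocks (diagonal fun i ↦ (1 - σ * Λ i)⁻¹) 0 0 0 =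
      fromBlocks (1 : Matrix n n 𝕜) 0 0 (0 : Matrix o o 𝕜) := by
  rw [fromBlocks_smul, sub_eq_add_neg, fromBlocks_neg, fromBlocks_add, fromBlocks_multiply]
  simp only [Matrix.mul_zero, Matrix.zero_mul, add_zero, smul_zero, neg_zero, ← sub_eq_add_neg]
  rw [← diagonal_one, ← diagonal_smul, diagonal_sub, diagonal_mul_diagonal]
  congr 2
  funext i
  exact mul_inv_cancel₀ (h i)

theorem exists_sub_smul_mul_eq_of_canonical {𝕜 n o : Type*} [Field 𝕜] [Fintype n] [Fintype o]
    [DecidableEq n] [DecidableEq o] {K KG W : Matrix (n ⊕ o) (n ⊕ o) 𝕜} (hW : IsUnit W)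
    {Λ : n → 𝕜} {D : Matrix o o 𝕜} (hK : Wᵀ * K * W = fromBlocks 1 0 0 0)
    (hKG : Wᵀ * KG * W = fromBlocks (diagonal Λ) 0 0 D) {σ : 𝕜} (hσ : ∀ i, 1 - σ * Λ i ≠ 0) :
    ∃ Q, (K - σ • KG) * Q = K :=
  exists_mul_eq_of_transpose_mul_mul_mul_eq
    (G := fromBlocks (diagonal fun i ↦ (1 - σ * Λ i)⁻¹) 0 0 0) hW <| by
    rw [Matrix.mul_sub, Matrix.sub_mul, Matrix.mul_smul, Matrix.smul_mul, hK, hKG]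
    exact fromBlocks_one_sub_smul_mul_fromBlocks_diagonal_inv Λ D σ hσ

end Matrix

namespace IsMoorePenrose

variable {m : Type*} [Fintype m] {A P Q K : Matrix m m ℝ}

theorem mul_mul_of_mul_eq (hP : IsMoorePenrose A P) (hQ : A * Q = K) : A * (P * K) = K := by
  rw [← hQ, ← Matrix.mul_assoc, ← Matrix.mul_assoc, hP.1]

theorem transpose_mul_mul_eq_zero {k : Type*} {Z : Matrix m k ℝ} (hP : IsMoorePenrose A P)
    (hQ : A * Q = K) (hZ : A * Z = 0) : Zᵀ * (P * K) = 0 := by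
  rw [← hQ, ← Matrix.mul_assoc P, ← hP.2.2.2, ← Matrix.mul_assoc, ← transpose_mul,
    Matrix.mul_assoc, hZ, Matrix.mul_zero, transpose_zero, Matrix.zero_mul]

theorem isSymm_mul_mul (hP : IsMoorePenrose A P) (hA : A.IsSymm) (hK : K.IsSymm)
    (hQ : A * Q = K) : (K * (P * K)).IsSymm := by
  have hKPK : K * (P * K) = Qᵀ * A * Q :=
    calc K * (P * K) = (A * Q)ᵀ * (P * K) := by rw [hQ, hK.eq]
      _ = Qᵀ * (A * (P * K)) := by rw [transpose_mul, hA.eq, Matrix.mul_assoc]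
      _ = Qᵀ * A * Q := by rw [hP.mul_mul_of_mul_eq hQ, ← hQ, Matrix.mul_assoc]
  rw [hKPK, IsSymm, transpose_mul, transpose_mul, transpose_transpose, hA.eq, Matrix.mul_assoc]

theorem transpose_mul_mul_mul_eq_zero {KG : Matrix m m ℝ} {σ : ℝ} {k : Type*}
    {Z : Matrix m k ℝ} (hP : IsMoorePenrose (K - σ • KG) P) (hσ : σ ≠ 0) (hK : K.IsSymm)
    (hQ : (K - σ • KG) * Q = K) (hZ : K * Z = 0) : Zᵀ * (KG * (P * K)) = 0 := by
  have hZK : Zᵀ * K = 0 := by rw [← hK.eq, ← transpose_mul, hZ, transpose_zero]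
  have h : Zᵀ * ((K - σ • KG) * (P * K)) = 0 := by rw [hP.mul_mul_of_mul_eq hQ, hZK]
  rw [Matrix.sub_mul, Matrix.mul_sub, ← Matrix.mul_assoc, hZK, Matrix.zero_mul, zero_sub,
    neg_eq_zero, Matrix.smul_mul, Matrix.mul_smul] at h
  exact (smul_eq_zero.1 h).resolve_left hσ

end IsMoorePenrose

theorem stmt16_general {n1 n2 n3 : ℕ}
    (K KG : Matrix (Fin n1 ⊕ (Fin n2 ⊕ Fin n3)) (Fin n1 ⊕ (Fin n2 ⊕ Fin n3)) ℝ)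
    (hKpsd : K.PosSemidef) (hKG : KGᵀ = KG)
    (W : Matrix (Fin n1 ⊕ (Fin n2 ⊕ Fin n3)) (Fin n1 ⊕ (Fin n2 ⊕ Fin n3)) ℝ)
    (hW : IsUnit W)
    (Λ1 : Fin n1 → ℝ) (Λ2 : Fin n2 → ℝ)
    (hcanKG : Wᵀ * KG * W
      = Matrix.fromBlocks (Matrix.diagonal Λ1) 0 0
          (Matrix.fromBlocks (Matrix.diagonal Λ2) 0 0 0))
    (hcanK : Wᵀ * K * W
      = Matrix.fromBlocks (1 : Matrix (Fin n1) (Fin n1) ℝ) 0 0 0)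
    (ZN : Matrix (Fin n1 ⊕ (Fin n2 ⊕ Fin n3)) (Fin n2) ℝ)
    (ZC : Matrix (Fin n1 ⊕ (Fin n2 ⊕ Fin n3)) (Fin n3) ℝ)
    (hZspan : LinearMap.range (Matrix.fromCols ZN ZC).mulVecLin
      = LinearMap.ker K.mulVecLin)
    (hZCspan : LinearMap.range ZC.mulVecLin
      = LinearMap.ker K.mulVecLin ⊓ LinearMap.ker KG.mulVecLin)
    (HN : Matrix (Fin n2) (Fin n2) ℝ) (HC : Matrix (Fin n3) (Fin n3) ℝ)
    (σ : ℝ) (hσ : σ ≠ 0) (hσΛ1 : ∀ i, 1 - σ * Λ1 i ≠ 0)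
    (P : Matrix (Fin n1 ⊕ (Fin n2 ⊕ Fin n3)) (Fin n1 ⊕ (Fin n2 ⊕ Fin n3)) ℝ)
    (hP : IsMoorePenrose (K - σ • KG) P) :
    ((K + (KG * ZN) * HN * (KG * ZN)ᵀ + ZC * HC * ZCᵀ) * (P * K))ᵀ
      = (K + (KG * ZN) * HN * (KG * ZN)ᵀ + ZC * HC * ZCᵀ) * (P * K) := by
  have hK : K.IsSymm := isHermitian_iff_isSymm.1 hKpsd.isHermitian
  obtain ⟨Q, hQ⟩ := exists_sub_smul_mul_eq_of_canonical hW hcanK hcanKG hσΛ1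
  have hKZN : K * ZN = 0 :=
    mul_eq_zero_of_range_le_ker <| (range_mulVecLin_le_fromCols_left ZN ZC).trans hZspan.le
  have hKZC : K * ZC = 0 := mul_eq_zero_of_range_le_ker <| hZCspan.le.trans inf_le_left
  have hKGZC : KG * ZC = 0 := mul_eq_zero_of_range_le_ker <| hZCspan.le.trans inf_le_right
  have hAZC : (K - σ • KG) * ZC = 0 := by
    rw [Matrix.sub_mul, hKZC, Matrix.smul_mul, hKGZC, smul_zero, sub_zero]
  have hMPK : (K + (KG * ZN) * HN * (KG * ZN)ᵀ + ZC * HC * ZCᵀ) * (P * K) = K * (P * K) := by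
    rw [transpose_mul, hKG]
    simp only [Matrix.add_mul, Matrix.mul_assoc, hP.transpose_mul_mul_mul_eq_zero hσ hK hQ hKZN,
      hP.transpose_mul_mul_eq_zero hQ hAZC, Matrix.mul_zero, add_zero]
  rw [hMPK]
  exact hP.isSymm_mul_mul (hK.sub (IsSymm.smul hKG σ)) hK hQ

/-- With M = K + (K_G Z_N) H_N (K_G Z_N)ᵀ + Z_C H_C Z_Cᵀ and
C = (K - σK_G)†K under the canonical form hypotheses, the matrix M C is symmetric,
i.e. C is self-adjoint with respect to the M-inner product. -/
theorem stmt16 {n1 n2 n3 : ℕ}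
    (K KG : Matrix (Fin n1 ⊕ (Fin n2 ⊕ Fin n3)) (Fin n1 ⊕ (Fin n2 ⊕ Fin n3)) ℝ)
    (hKpsd : K.PosSemidef) (hKG : KGᵀ = KG)
    (W : Matrix (Fin n1 ⊕ (Fin n2 ⊕ Fin n3)) (Fin n1 ⊕ (Fin n2 ⊕ Fin n3)) ℝ)
    (hW : IsUnit W)
    (Λ1 : Fin n1 → ℝ) (Λ2 : Fin n2 → ℝ) (hΛ2 : ∀ i, Λ2 i ≠ 0)
    (hcanKG : Wᵀ * KG * W
      = Matrix.fromBlocks (Matrix.diagonal Λ1) 0 0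
          (Matrix.fromBlocks (Matrix.diagonal Λ2) 0 0 0))
    (hcanK : Wᵀ * K * W
      = Matrix.fromBlocks (1 : Matrix (Fin n1) (Fin n1) ℝ) 0 0 0)
    (hW31 : (W.submatrix id (Sum.inr ∘ Sum.inr : Fin n3 → _))ᵀ
      * W.submatrix id (Sum.inl : Fin n1 → _) = 0)
    (hW32 : (W.submatrix id (Sum.inr ∘ Sum.inr : Fin n3 → _))ᵀ
      * W.submatrix id (Sum.inr ∘ Sum.inl : Fin n2 → _) = 0)
    (ZN : Matrix (Fin n1 ⊕ (Fin n2 ⊕ Fin n3)) (Fin n2) ℝ)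
    (ZC : Matrix (Fin n1 ⊕ (Fin n2 ⊕ Fin n3)) (Fin n3) ℝ)
    (hZind : LinearIndependent ℝ (Matrix.fromCols ZN ZC)ᵀ)
    (hZspan : LinearMap.range (Matrix.fromCols ZN ZC).mulVecLin
      = LinearMap.ker K.mulVecLin)
    (hZCind : LinearIndependent ℝ ZCᵀ)
    (hZCspan : LinearMap.range ZC.mulVecLin
      = LinearMap.ker K.mulVecLin ⊓ LinearMap.ker KG.mulVecLin)
    (HN : Matrix (Fin n2) (Fin n2) ℝ) (HC : Matrix (Fin n3) (Fin n3) ℝ)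
    (hHN : HN.PosDef) (hHC : HC.PosDef)
    (σ : ℝ) (hσ : σ ≠ 0) (hσΛ1 : ∀ i, 1 - σ * Λ1 i ≠ 0)
    (P : Matrix (Fin n1 ⊕ (Fin n2 ⊕ Fin n3)) (Fin n1 ⊕ (Fin n2 ⊕ Fin n3)) ℝ)
    (hP : IsMoorePenrose (K - σ • KG) P) :
    ((K + (KG * ZN) * HN * (KG * ZN)ᵀ + ZC * HC * ZCᵀ) * (P * K))ᵀ
      = (K + (KG * ZN) * HN * (KG * ZN)ᵀ + ZC * HC * ZCᵀ) * (P * K) :=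
  stmt16_general K KG hKpsd hKG W hW Λ1 Λ2 hcanKG hcanK ZN ZC hZspan hZCspan HN HC σ hσ hσΛ1 P hP
end

section
/- Under the canonical form hypotheses, for α < 0 with K - αK_G nonsingular on Z_c^⊥ (i.e., α not an eigenvalue), the number of eigenvalues λ of the pencil K - λK_G with α < λ < 0 and eigenvector orthogonal to Z_c equals ν_-(K - αK_G) - ν_-(Z_N^T K_G Z_N), where ν_- denotes the number of negative eigenvalues. -/
open Matrix

open Matrix Submodule Module

section Core
variable {m : Type*} [Fintype m] [DecidableEq m]

/-- quadratic form of a matrix -/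
def qf (A : Matrix m m ℝ) (x : m → ℝ) : ℝ := A *ᵥ x ⬝ᵥ x

variable {A : Matrix m m ℝ} {v : m → m → ℝ} {μ : m → ℝ}

lemma sum_smul_dot (c : m → ℝ) (x : m → ℝ) :
    (∑ i, c i • v i) ⬝ᵥ x = ∑ i, c i * (v i ⬝ᵥ x) := by
  simp only [dotProduct, Finset.sum_apply, Pi.smul_apply, smul_eq_mul, Finset.sum_mul,
    Finset.mul_sum]
  rw [Finset.sum_comm]
  exact Finset.sum_congr rfl fun i _ => Finset.sum_congr rfl fun k _ => by ring

lemma dot_sum_smul (hv : ∀ i j, v i ⬝ᵥ v j = if i = j then 1 else 0)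
    (c : m → ℝ) (j : m) : v j ⬝ᵥ (∑ i, c i • v i) = c j := by
  have h1 : v j ⬝ᵥ (∑ i, c i • v i) = ∑ i, c i * (v j ⬝ᵥ v i) := by
    simp only [dotProduct, Finset.sum_apply, Pi.smul_apply, smul_eq_mul, Finset.mul_sum]
    rw [Finset.sum_comm]
    exact Finset.sum_congr rfl fun i _ => Finset.sum_congr rfl fun k _ => by ring
  rw [h1]
  simp [hv, mul_ite, Finset.sum_ite_eq]

lemma li_of_ortho (hv : ∀ i j, v i ⬝ᵥ v j = if i = j then 1 else 0) :
    LinearIndependent ℝ v := by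
  rw [Fintype.linearIndependent_iff]
  intro g hg i
  have := dot_sum_smul hv g i
  rw [hg] at this
  simpa using this.symm

lemma expansion (hv : ∀ i j, v i ⬝ᵥ v j = if i = j then 1 else 0) (x : m → ℝ) :
    x = ∑ j, (v j ⬝ᵥ x) • v j := by
  rcases isEmpty_or_nonempty m with h | h
  · funext i; exact (h.false i).elim
  have li := li_of_ortho hv
  let b : Basis m ℝ (m → ℝ) := basisOfLinearIndependentOfCardEqFinrank li
    (by rw [finrank_fintype_fun_eq_card])
  have hb : ∀ i, b i = v i := fun i => by
    rw [coe_basisOfLinearIndependentOfCardEqFinrank]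
  have hx : x = ∑ i, b.repr x i • v i := by
    conv_lhs => rw [← b.sum_repr x]
    exact Finset.sum_congr rfl fun i _ => by rw [hb]
  have hc : ∀ j, v j ⬝ᵥ x = b.repr x j := by
    intro j; conv_lhs => rw [hx]
    exact dot_sum_smul hv _ j
  calc x = ∑ i, b.repr x i • v i := hx
    _ = ∑ j, (v j ⬝ᵥ x) • v j := Finset.sum_congr rfl fun j _ => by rw [hc]

lemma qf_eq (hv : ∀ i j, v i ⬝ᵥ v j = if i = j then 1 else 0)
    (hAv : ∀ i, A *ᵥ v i = μ i • v i) (x : m → ℝ) :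
    qf A x = ∑ j, μ j * (v j ⬝ᵥ x) ^ 2 := by
  have hx := expansion hv x
  have hAx : A *ᵥ x = ∑ j, ((v j ⬝ᵥ x) * μ j) • v j := by
    conv_lhs => rw [hx, ← mulVecLin_apply]
    rw [map_sum]
    refine Finset.sum_congr rfl fun j _ => ?_
    rw [_root_.map_smul, mulVecLin_apply, hAv j, smul_smul]
  rw [qf, hAx, sum_smul_dot]
  refine Finset.sum_congr rfl fun j _ => ?_
  ring

end Core

section Core2
set_option linter.unusedSectionVars false
variable {m : Type*} [Fintype m] [DecidableEq m]
variable {A : Matrix m m ℝ} {v : m → m → ℝ} {μ : m → ℝ}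

lemma mem_span_dot (hv : ∀ i j, v i ⬝ᵥ v j = if i = j then 1 else 0)
    {p : m → Prop} {x : m → ℝ} (hx : x ∈ span ℝ (v '' {i | p i})) :
    ∀ j, ¬ p j → v j ⬝ᵥ x = 0 := by
  induction hx using Submodule.span_induction with
  | mem y hy =>
    obtain ⟨i, hi, rfl⟩ := hy
    intro j hj
    rw [hv]
    simp only [ite_eq_right_iff]
    intro h; exact absurd (h ▸ hi) hj
  | zero => intro j _; simp
  | add y z _ _ hy hz => intro j hj; rw [dotProduct_add, hy j hj, hz j hj, add_zero]
  | smul c y _ hy => intro j hj; rw [dotProduct_smul, hy j hj, smul_zero]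

lemma finrank_span_pred (hv : ∀ i j, v i ⬝ᵥ v j = if i = j then 1 else 0)
    (p : m → Prop) [DecidablePred p] :
    finrank ℝ (span ℝ (v '' {i | p i})) = Fintype.card {i // p i} := by
  have li := (li_of_ortho hv).comp (Subtype.val : {i // p i} → m) Subtype.val_injective
  have hr : Set.range (v ∘ (Subtype.val : {i // p i} → m)) = v '' {i | p i} := by
    rw [Set.range_comp, Subtype.range_coe_subtype]
  rw [← hr]
  exact finrank_span_eq_card li

lemma qf_neg_on_span (hv : ∀ i j, v i ⬝ᵥ v j = if i = j then 1 else 0)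
    (hAv : ∀ i, A *ᵥ v i = μ i • v i) {x : m → ℝ}
    (hx : x ∈ span ℝ (v '' {i | μ i < 0})) (hx0 : x ≠ 0) : qf A x < 0 := by
  have hdot := mem_span_dot hv hx
  obtain ⟨j0, hj0⟩ : ∃ j, v j ⬝ᵥ x ≠ 0 := by
    by_contra h
    push_neg at h
    apply hx0
    rw [expansion hv x]
    simp [h]
  have hj0neg : μ j0 < 0 := by
    by_contra h
    exact hj0 (hdot j0 (by simpa using h))
  rw [qf_eq hv hAv]
  have : ∑ j : m, μ j * (v j ⬝ᵥ x) ^ 2 < ∑ j : m, (0 : ℝ) := by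
    refine Finset.sum_lt_sum (fun i _ => ?_) ⟨j0, Finset.mem_univ j0, ?_⟩
    · rcases lt_or_ge (μ i) 0 with h | h
      · exact mul_nonpos_of_nonpos_of_nonneg h.le (sq_nonneg _)
      · rw [hdot i (not_lt.mpr h)]; simp
    · have h2 : (0:ℝ) < (v j0 ⬝ᵥ x) ^ 2 := by positivity
      nlinarith
  simpa using this

lemma qf_nonneg_on_span (hv : ∀ i j, v i ⬝ᵥ v j = if i = j then 1 else 0)
    (hAv : ∀ i, A *ᵥ v i = μ i • v i) {x : m → ℝ}
    (hx : x ∈ span ℝ (v '' {i | 0 ≤ μ i})) : 0 ≤ qf A x := by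
  have hdot := mem_span_dot hv hx
  rw [qf_eq hv hAv]
  refine Finset.sum_nonneg fun i _ => ?_
  rcases le_or_gt 0 (μ i) with h | h
  · positivity
  · rw [hdot i (by simpa using h)]; simp

lemma negdef_finrank_le (hv : ∀ i j, v i ⬝ᵥ v j = if i = j then 1 else 0)
    (hAv : ∀ i, A *ᵥ v i = μ i • v i) (S : Submodule ℝ (m → ℝ))
    (hS : ∀ x ∈ S, x ≠ 0 → qf A x < 0) :
    finrank ℝ S ≤ Fintype.card {i // μ i < 0} := by
  classical
  set P := span ℝ (v '' {i | 0 ≤ μ i}) with hP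
  have hdisj : S ⊓ P = ⊥ := by
    rw [eq_bot_iff]
    intro x hx
    rcases Submodule.mem_inf.mp hx with ⟨hx1, hx2⟩
    by_contra h
    have h0 : x ≠ 0 := by simpa [Submodule.mem_bot] using h
    exact absurd (qf_nonneg_on_span hv hAv hx2) (not_le.mpr (hS x hx1 h0))
  have hsum := Submodule.finrank_sup_add_finrank_inf_eq S P
  rw [hdisj] at hsum
  have hle : finrank ℝ (S ⊔ P : Submodule ℝ (m → ℝ)) ≤ Fintype.card m := by
    have := Submodule.finrank_le (S ⊔ P : Submodule ℝ (m → ℝ))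
    rwa [finrank_fintype_fun_eq_card] at this
  have hPr : finrank ℝ P = Fintype.card {i // 0 ≤ μ i} := finrank_span_pred hv _
  have hcards : Fintype.card {i // μ i < 0} + Fintype.card {i // 0 ≤ μ i}
      = Fintype.card m := by
    have := Fintype.card_subtype_compl (fun i => μ i < 0)
    have he : Fintype.card {i // 0 ≤ μ i} = Fintype.card {i // ¬ μ i < 0} :=
      Fintype.card_congr (Equiv.subtypeEquivRight fun i => not_lt.symm)
    have hle2 : Fintype.card {i // μ i < 0} ≤ Fintype.card m := Fintype.card_subtype_le _
    omega
  simp only [finrank_bot, add_zero] at hsum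
  omega

lemma inertia_le {B : Matrix m m ℝ} {w : m → m → ℝ} {ν : m → ℝ}
    (hv : ∀ i j, v i ⬝ᵥ v j = if i = j then 1 else 0)
    (hAv : ∀ i, A *ᵥ v i = μ i • v i)
    (hw : ∀ i j, w i ⬝ᵥ w j = if i = j then 1 else 0)
    (hBw : ∀ i, B *ᵥ w i = ν i • w i)
    (P : Matrix m m ℝ) (hP : IsUnit P) (hBA : B = Pᵀ * A * P) :
    Fintype.card {i // ν i < 0} ≤ Fintype.card {i // μ i < 0} := by
  classical
  have hPd : IsUnit P.det := (Matrix.isUnit_iff_isUnit_det P).mp hP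
  have hinj : Function.Injective (P.mulVecLin) := by
    intro x y hxy
    have : P⁻¹ *ᵥ (P *ᵥ x) = P⁻¹ *ᵥ (P *ᵥ y) := by
      simpa [Matrix.mulVecLin_apply] using congrArg (fun z => P⁻¹ *ᵥ z) hxy
    simpa [Matrix.mulVec_mulVec, Matrix.nonsing_inv_mul P hPd] using this
  set S := span ℝ (w '' {i | ν i < 0}) with hSdef
  have hq : ∀ x : m → ℝ, qf B x = qf A (P *ᵥ x) := by
    intro x
    rw [qf, qf, hBA]
    rw [← Matrix.mulVec_mulVec, ← Matrix.mulVec_mulVec]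
    rw [show (Pᵀ *ᵥ (A *ᵥ (P *ᵥ x))) ⬝ᵥ x = (A *ᵥ (P *ᵥ x)) ⬝ᵥ (P *ᵥ x) by
      rw [Matrix.mulVec_transpose, dotProduct_mulVec]]
  have hSneg : ∀ y ∈ S.map P.mulVecLin, y ≠ 0 → qf A y < 0 := by
    intro y hy hy0
    obtain ⟨x, hx, rfl⟩ := Submodule.mem_map.mp hy
    have hx0 : x ≠ 0 := by
      rintro rfl; exact hy0 (map_zero _)
    have := qf_neg_on_span hw hBw hx hx0
    rw [hq x] at this
    simpa only [Matrix.mulVecLin_apply] using this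
  calc Fintype.card {i // ν i < 0} = finrank ℝ S := (finrank_span_pred hw _).symm
    _ = finrank ℝ (S.map P.mulVecLin) :=
        (LinearEquiv.finrank_eq (Submodule.equivMapOfInjective _ hinj S))
    _ ≤ Fintype.card {i // μ i < 0} := negdef_finrank_le hv hAv _ hSneg

lemma inertia_eq {B : Matrix m m ℝ} {w : m → m → ℝ} {ν : m → ℝ}
    (hv : ∀ i j, v i ⬝ᵥ v j = if i = j then 1 else 0)
    (hAv : ∀ i, A *ᵥ v i = μ i • v i)
    (hw : ∀ i j, w i ⬝ᵥ w j = if i = j then 1 else 0)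
    (hBw : ∀ i, B *ᵥ w i = ν i • w i)
    (P : Matrix m m ℝ) (hP : IsUnit P) (hBA : B = Pᵀ * A * P) :
    Fintype.card {i // ν i < 0} = Fintype.card {i // μ i < 0} := by
  classical
  have hPd : IsUnit P.det := (Matrix.isUnit_iff_isUnit_det P).mp hP
  have hPinv : IsUnit P⁻¹ :=
    ⟨⟨P⁻¹, P, Matrix.nonsing_inv_mul P hPd, Matrix.mul_nonsing_inv P hPd⟩, rfl⟩
  refine le_antisymm (inertia_le hv hAv hw hBw P hP hBA) ?_
  refine inertia_le hw hBw hv hAv P⁻¹ hPinv ?_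
  rw [hBA, Matrix.transpose_nonsing_inv]
  calc A = (Pᵀ⁻¹ * Pᵀ) * A * (P * P⁻¹) := by
        rw [Matrix.nonsing_inv_mul _ (by rwa [Matrix.det_transpose]),
          Matrix.mul_nonsing_inv _ hPd, Matrix.one_mul, Matrix.mul_one]
    _ = Pᵀ⁻¹ * (Pᵀ * A * P) * P⁻¹ := by noncomm_ring
end Core2

section Bridge
set_option linter.unusedSectionVars false
variable {m : Type*} [Fintype m] [DecidableEq m]

lemma herm_ortho {A : Matrix m m ℝ} (hA : A.IsHermitian) (i j : m) :
    (fun k => hA.eigenvectorBasis i k) ⬝ᵥ (fun k => hA.eigenvectorBasis j k)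
      = if i = j then 1 else 0 := by
  have := (orthonormal_iff_ite (𝕜 := ℝ)).mp hA.eigenvectorBasis.orthonormal i j
  simp only [PiLp.inner_apply, RCLike.inner_apply] at this
  simpa [dotProduct, mul_comm] using this

lemma herm_eig {A : Matrix m m ℝ} (hA : A.IsHermitian) (j : m) :
    A *ᵥ (fun k => hA.eigenvectorBasis j k)
      = hA.eigenvalues j • (fun k => hA.eigenvectorBasis j k) :=
  hA.mulVec_eigenvectorBasis j

lemma diag_ortho (i j : m) :
    (Pi.single i (1:ℝ)) ⬝ᵥ (Pi.single j (1:ℝ)) = if i = j then 1 else 0 := by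
  rcases eq_or_ne i j with rfl | h
  · simp [dotProduct, Pi.single_apply]
  · simp [dotProduct, Pi.single_apply, h, mul_ite, Finset.sum_ite_eq]
    intro he; exact absurd he.symm h

lemma diag_eig (d : m → ℝ) (i : m) :
    Matrix.diagonal d *ᵥ Pi.single i (1:ℝ) = d i • (Pi.single i (1:ℝ) : m → ℝ) := by
  funext k
  rw [Matrix.mulVec_diagonal]
  by_cases h : k = i <;> simp [Pi.single_apply, h]

/-- Main inertia theorem specialised: number of negative eigenvalues of a symmetric
matrix congruent to a diagonal matrix. -/
lemma negcount_of_congruent_diagonal {B : Matrix m m ℝ} (hB : B.IsHermitian)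
    (d : m → ℝ) (P : Matrix m m ℝ) (hP : IsUnit P)
    (hcong : B = Pᵀ * Matrix.diagonal d * P) :
    Nat.card {i // hB.eigenvalues i < 0} = Nat.card {i // d i < 0} := by
  classical
  rw [Nat.card_eq_fintype_card, Nat.card_eq_fintype_card]
  exact inertia_eq (fun i j => diag_ortho i j) (diag_eig d)
    (herm_ortho hB) (herm_eig hB) P hP hcong
end Bridge

lemma iff_neg1 {α t : ℝ} (hα : α < 0) :
    (t ≠ 0 ∧ α < t⁻¹ ∧ t⁻¹ < 0) ↔ 1 - α * t < 0 := by
  constructor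
  · rintro ⟨ht0, h1, h2⟩
    have ht : t < 0 := inv_lt_zero.mp h2
    nlinarith [mul_inv_cancel₀ ht0]
  · intro h
    have h1 : 1 < α * t := by linarith
    have ht : t < 0 := by nlinarith
    refine ⟨ht.ne, ?_, inv_lt_zero.mpr ht⟩
    nlinarith [mul_inv_cancel₀ (ne_of_lt ht)]

lemma iff_neg2 {α s : ℝ} (hα : α < 0) : -(α * s) < 0 ↔ s < 0 := by
  constructor <;> intro h <;> nlinarith

lemma sub_quad {a b m : Type*} [Fintype m] (W : Matrix m m ℝ) (M : Matrix m m ℝ)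
    (f : a → m) (g : b → m) :
    (W.submatrix id f)ᵀ * M * (W.submatrix id g) = (Wᵀ * M * W).submatrix f g := by
  ext i j
  simp [Matrix.mul_apply]

/-- Under the canonical form hypotheses (so the finite nonzero
eigenvalues of the pencil K - λK_G with eigenvector ⟂ Z_c are the reciprocals of
the nonzero diagonal entries of Λ₁), for α < 0 not an eigenvalue, the number of such
pencil eigenvalues in (α, 0) equals ν₋(K - αK_G) - ν₋(Z_Nᵀ K_G Z_N), stated
additively: n(α,0) + ν₋(Z_Nᵀ K_G Z_N) = ν₋(K - αK_G). -/
theorem stmt18 {n1 n2 n3 : ℕ}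
    (K KG : Matrix (Fin n1 ⊕ (Fin n2 ⊕ Fin n3)) (Fin n1 ⊕ (Fin n2 ⊕ Fin n3)) ℝ)
    (hKpsd : K.PosSemidef) (hKG : KGᵀ = KG)
    (W : Matrix (Fin n1 ⊕ (Fin n2 ⊕ Fin n3)) (Fin n1 ⊕ (Fin n2 ⊕ Fin n3)) ℝ)
    (hW : IsUnit W)
    (Λ1 : Fin n1 → ℝ) (Λ2 : Fin n2 → ℝ) (hΛ2 : ∀ i, Λ2 i ≠ 0)
    (hcanKG : Wᵀ * KG * W
      = Matrix.fromBlocks (Matrix.diagonal Λ1) 0 0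
          (Matrix.fromBlocks (Matrix.diagonal Λ2) 0 0 0))
    (hcanK : Wᵀ * K * W
      = Matrix.fromBlocks (1 : Matrix (Fin n1) (Fin n1) ℝ) 0 0 0)
    (ZN : Matrix (Fin n1 ⊕ (Fin n2 ⊕ Fin n3)) (Fin n2) ℝ)
    (R22 : Matrix (Fin n2) (Fin n2) ℝ) (R32 : Matrix (Fin n3) (Fin n2) ℝ)
    (hR22 : IsUnit R22)
    (hZN : ZN = W.submatrix id (Sum.inr ∘ Sum.inl : Fin n2 → _) * R22
      + W.submatrix id (Sum.inr ∘ Sum.inr : Fin n3 → _) * R32)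
    (α : ℝ) (hα : α < 0) (hreg : ∀ i, 1 - α * Λ1 i ≠ 0) :
    ∀ (h1 : (K - α • KG).IsHermitian) (h2 : (ZNᵀ * KG * ZN).IsHermitian),
      Nat.card {i : Fin n1 // Λ1 i ≠ 0 ∧ α < (Λ1 i)⁻¹ ∧ (Λ1 i)⁻¹ < 0}
          + Nat.card {i // h2.eigenvalues i < 0}
        = Nat.card {i // h1.eigenvalues i < 0} := by
  intro h1 h2
  classical
  set d : (Fin n1 ⊕ (Fin n2 ⊕ Fin n3)) → ℝ :=
    Sum.elim (fun i => 1 - α * Λ1 i) (Sum.elim (fun j => -(α * Λ2 j)) (fun _ => (0:ℝ)))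
    with hd
  have hWd : IsUnit W.det := (Matrix.isUnit_iff_isUnit_det W).mp hW
  have hWinv : IsUnit W⁻¹ :=
    ⟨⟨W⁻¹, W, Matrix.nonsing_inv_mul W hWd, Matrix.mul_nonsing_inv W hWd⟩, rfl⟩
  -- canonical form of K - α KG
  have hD : Wᵀ * (K - α • KG) * W = Matrix.diagonal d := by
    have : Wᵀ * (K - α • KG) * W = Wᵀ * K * W - α • (Wᵀ * KG * W) := by
      rw [Matrix.mul_sub, Matrix.sub_mul]
      congr 1
      rw [Matrix.mul_smul, Matrix.smul_mul]
    rw [this, hcanK, hcanKG]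
    ext i j
    rcases i with i | i | i <;> rcases j with j | j | j <;>
      simp [Matrix.diagonal_apply, Matrix.one_apply, Sum.elim_inl, Sum.elim_inr, hd,
        Pi.smul_apply, smul_eq_mul, mul_ite, Matrix.fromBlocks_apply₁₁,
        Matrix.fromBlocks_apply₁₂, Matrix.fromBlocks_apply₂₁, Matrix.fromBlocks_apply₂₂] <;>
      split <;> ring
  have hcong1 : K - α • KG = (W⁻¹)ᵀ * Matrix.diagonal d * W⁻¹ := by
    rw [← hD]
    calc K - α • KG = ((W * W⁻¹)ᵀ) * (K - α • KG) * (W * W⁻¹) := by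
          rw [Matrix.mul_nonsing_inv W hWd]; simp
      _ = (W⁻¹)ᵀ * (Wᵀ * (K - α • KG) * W) * W⁻¹ := by
          rw [Matrix.transpose_mul]
          rw [Matrix.mul_assoc, Matrix.mul_assoc, Matrix.mul_assoc, Matrix.mul_assoc,
            Matrix.mul_assoc]
  have e1 : Nat.card {i // h1.eigenvalues i < 0} = Nat.card {i // d i < 0} :=
    negcount_of_congruent_diagonal h1 d W⁻¹ hWinv hcong1
  -- ZN part
  set S := W.submatrix id (Sum.inr ∘ Sum.inl : Fin n2 → _) with hS
  set T := W.submatrix id (Sum.inr ∘ Sum.inr : Fin n3 → _) with hT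
  have hSS : Sᵀ * KG * S = Matrix.diagonal Λ2 := by
    rw [hS, sub_quad, hcanKG]; ext i j; simp
  have hST : Sᵀ * KG * T = 0 := by
    rw [hS, hT, sub_quad, hcanKG]; ext i j; simp
  have hTS : Tᵀ * KG * S = 0 := by
    rw [hS, hT, sub_quad, hcanKG]; ext i j; simp
  have hTT : Tᵀ * KG * T = 0 := by
    rw [hT, sub_quad, hcanKG]; ext i j; simp
  have hZ : ZNᵀ * KG * ZN = R22ᵀ * Matrix.diagonal Λ2 * R22 := by
    rw [hZN]
    simp only [Matrix.transpose_add, Matrix.transpose_mul, Matrix.add_mul, Matrix.mul_add,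
      Matrix.mul_assoc]
    have c1 : Sᵀ * (KG * (S * R22)) = Matrix.diagonal Λ2 * R22 := by
      rw [← Matrix.mul_assoc, ← Matrix.mul_assoc, hSS]
    have c2 : Sᵀ * (KG * (T * R32)) = 0 := by
      rw [← Matrix.mul_assoc, ← Matrix.mul_assoc, hST, Matrix.zero_mul]
    have c3 : Tᵀ * (KG * (S * R22)) = 0 := by
      rw [← Matrix.mul_assoc, ← Matrix.mul_assoc, hTS, Matrix.zero_mul]
    have c4 : Tᵀ * (KG * (T * R32)) = 0 := by
      rw [← Matrix.mul_assoc, ← Matrix.mul_assoc, hTT, Matrix.zero_mul]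
    rw [c1, c2, c3, c4]
    simp [Matrix.mul_assoc]
  have e2 : Nat.card {i // h2.eigenvalues i < 0} = Nat.card {j // Λ2 j < 0} :=
    negcount_of_congruent_diagonal h2 Λ2 R22 hR22 hZ
  -- count splitting
  have esplit : Nat.card {i // d i < 0}
      = Nat.card {i : Fin n1 // d (Sum.inl i) < 0}
        + (Nat.card {j : Fin n2 // d (Sum.inr (Sum.inl j)) < 0}
          + Nat.card {k : Fin n3 // d (Sum.inr (Sum.inr k)) < 0}) := by
    rw [Nat.card_congr (Equiv.subtypeSum), Nat.card_sum,
      Nat.card_congr (Equiv.subtypeSum (p := fun x => d (Sum.inr x) < 0)), Nat.card_sum]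
  have h3 : Nat.card {k : Fin n3 // d (Sum.inr (Sum.inr k)) < 0} = 0 := by
    have : IsEmpty {k : Fin n3 // d (Sum.inr (Sum.inr k)) < 0} :=
      ⟨fun x => absurd x.2 (by simp [hd])⟩
    exact Nat.card_of_isEmpty
  have hc1 : Nat.card {i : Fin n1 // d (Sum.inl i) < 0}
      = Nat.card {i : Fin n1 // Λ1 i ≠ 0 ∧ α < (Λ1 i)⁻¹ ∧ (Λ1 i)⁻¹ < 0} :=
    Nat.card_congr (Equiv.subtypeEquivRight fun i => by
      simp only [hd, Sum.elim_inl]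
      exact (iff_neg1 hα).symm)
  have hc2 : Nat.card {j : Fin n2 // d (Sum.inr (Sum.inl j)) < 0}
      = Nat.card {j : Fin n2 // Λ2 j < 0} :=
    Nat.card_congr (Equiv.subtypeEquivRight fun j => by
      simp only [hd, Sum.elim_inr, Sum.elim_inl]
      exact iff_neg2 hα)
  rw [e1, e2, esplit, h3, hc1, hc2]
  omega
end
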